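/- arXiv:2311.13289 — 15 statements merged into one kernel-verified Lean document; each statement's English description precedes it below -/
import Mathlib

section
/- Let M be a metric space, let N be a subset of M which is a local retract of M, and let X be a proper metric space. Then for every L ≥ 0 and every L-Lipschitz map f : N → X there exists an L-Lipschitz map F : M → X such that F(x) = f(x) for every x ∈ N. -/
/-- A subset `N` of a metric space `M` is a local retract of `M` if for every finite
subset `E` of `M` and every `ε > 0` there exists a `(1+ε)`-Lipschitz map `r : E → N`
fixing every point of `E ∩ N`. -/
def IsLocalRetract {M : Type*} [MetricSpace M] (N : Set M) : Prop :=
  ∀ E : Finset M, ∀ ε : ℝ, 0 < ε →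
    ∃ r : M → M, (∀ x ∈ E, r x ∈ N) ∧ (∀ e ∈ E, e ∈ N → r e = e) ∧
      ∀ x ∈ E, ∀ y ∈ E, dist (r x) (r y) ≤ (1 + ε) * dist x y

theorem stmt0 {M X : Type*} [MetricSpace M] [MetricSpace X] [ProperSpace X]
    (N : Set M) (hN : IsLocalRetract N) (L : ℝ) (hL : 0 ≤ L)
    (f : N → X) (hf : ∀ x y : N, dist (f x) (f y) ≤ L * dist x y) :
    ∃ F : M → X, (∀ x y : M, dist (F x) (F y) ≤ L * dist x y) ∧
      ∀ x : N, F x = f x := by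
  classical
  cases isEmpty_or_nonempty M with
  | inl h =>
    exact ⟨fun x => isEmptyElim x, fun x => isEmptyElim x, fun x => isEmptyElim (x : M)⟩
  | inr h =>
    obtain ⟨m⟩ := h
    obtain ⟨r0, hr01, -, -⟩ := hN {m} 1 one_pos
    have hx0mem : r0 m ∈ N := hr01 m (Finset.mem_singleton_self m)
    set x₀ : N := ⟨r0 m, hx0mem⟩ with hx₀
    choose r hr1 hr2 hr3 using fun i : Finset M × ℕ => hN i.1 (1/(i.2+1)) (by positivity)
    set g : Finset M × ℕ → M → X := fun i x =>
      if h : x ∈ i.1 then f ⟨r i x, hr1 i x h⟩ else f x₀ with hg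
    obtain ⟨U, hU⟩ := Filter.exists_ultrafilter_le (Filter.atTop : Filter (Finset M × ℕ))
    have hbound : ∀ x : M, ∀ᶠ i in Filter.atTop,
        g i x ∈ Metric.closedBall (f x₀) (L * (2 * dist x (x₀ : M))) := by
      intro x
      filter_upwards [Filter.eventually_ge_atTop (({x, (x₀ : M)} : Finset M), 0)] with i hi
      have hx : x ∈ i.1 := hi.1 (by simp)
      have hx0' : (x₀ : M) ∈ i.1 := hi.1 (by simp)
      simp only [hg, dif_pos hx]
      rw [Metric.mem_closedBall]
      have h1 : dist (r i x) (r i (x₀ : M)) ≤ (1 + 1/(i.2+1)) * dist x (x₀ : M) :=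
        hr3 i x hx _ hx0'
      have h2 : r i (x₀ : M) = (x₀ : M) := hr2 i _ hx0' x₀.2
      calc dist (f ⟨r i x, hr1 i x hx⟩) (f x₀) ≤ L * dist (r i x) (x₀ : M) := hf _ _
        _ ≤ L * (2 * dist x (x₀ : M)) := by
            apply mul_le_mul_of_nonneg_left _ hL
            calc dist (r i x) (x₀ : M) = dist (r i x) (r i (x₀ : M)) := by rw [h2]
              _ ≤ (1 + 1/(i.2+1)) * dist x (x₀ : M) := h1
              _ ≤ 2 * dist x (x₀ : M) := by
                  apply mul_le_mul_of_nonneg_right _ dist_nonneg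
                  have : 1/((i.2 : ℝ)+1) ≤ 1 := by
                    rw [div_le_one (by positivity)]
                    linarith [Nat.cast_nonneg (α := ℝ) i.2]
                  linarith
    have hlim : ∀ x : M, ∃ z : X, Filter.Tendsto (fun i => g i x) U (nhds z) := by
      intro x
      have hK : IsCompact (Metric.closedBall (f x₀) (L * (2 * dist x (x₀ : M)))) :=
        isCompact_closedBall _ _
      have hmem : Metric.closedBall (f x₀) (L * (2 * dist x (x₀ : M))) ∈
          Ultrafilter.map (fun i => g i x) U := Filter.mem_map.mpr (hU (hbound x))
      obtain ⟨z, _, hz⟩ := hK.ultrafilter_le_nhds _ (Filter.le_principal_iff.mpr hmem)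
      exact ⟨z, hz⟩
    choose F hF using hlim
    refine ⟨F, ?_, ?_⟩
    · intro x y
      refine le_of_forall_pos_le_add ?_
      intro ε hε
      obtain ⟨n₀, hn₀⟩ := exists_nat_gt (L * dist x y / ε)
      have hstep : ∀ᶠ i in Filter.atTop,
          dist (g i x) (g i y) ≤ L * dist x y + ε := by
        filter_upwards [Filter.eventually_ge_atTop (({x, y} : Finset M), n₀)] with i hi
        have hx : x ∈ i.1 := hi.1 (by simp)
        have hy : y ∈ i.1 := hi.1 (by simp)
        have hn : (n₀ : ℝ) ≤ i.2 := Nat.cast_le.mpr hi.2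
        simp only [hg, dif_pos hx, dif_pos hy]
        have h1 : dist (r i x) (r i y) ≤ (1 + 1/(i.2+1)) * dist x y := hr3 i x hx y hy
        have key : L * ((1 + 1/(i.2+1)) * dist x y) ≤ L * dist x y + ε := by
          have hd : (0:ℝ) ≤ dist x y := dist_nonneg
          have hpos : (0:ℝ) < (i.2:ℝ) + 1 := by positivity
          have h3 : L * dist x y / ((i.2:ℝ)+1) ≤ ε := by
            rw [div_le_iff₀ hpos]
            have : L * dist x y < ε * (n₀ + 1) := by
              have := (div_lt_iff₀ hε).mp hn₀
              nlinarith
            nlinarith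
          have : L * ((1 + 1/(i.2+1)) * dist x y)
              = L * dist x y + L * dist x y / ((i.2:ℝ)+1) := by ring
          linarith
        calc dist (f ⟨r i x, hr1 i x hx⟩) (f ⟨r i y, hr1 i y hy⟩)
            ≤ L * dist (r i x) (r i y) := hf _ _
          _ ≤ L * ((1 + 1/(i.2+1)) * dist x y) := mul_le_mul_of_nonneg_left h1 hL
          _ ≤ L * dist x y + ε := key
      have htd : Filter.Tendsto (fun i => dist (g i x) (g i y)) U
          (nhds (dist (F x) (F y))) := (hF x).dist (hF y)
      exact le_of_tendsto htd (hU hstep)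
    · intro x
      have hstep : ∀ᶠ i in (U : Filter (Finset M × ℕ)), g i (x : M) = f x := by
        apply hU
        filter_upwards [Filter.eventually_ge_atTop (({(x : M)} : Finset M), 0)] with i hi
        have hx : (x : M) ∈ i.1 := hi.1 (by simp)
        have h2 : r i (x : M) = (x : M) := hr2 i _ hx x.2
        simp only [hg, dif_pos hx]
        congr 1
        exact Subtype.ext h2
      have : Filter.Tendsto (fun i => g i (x : M)) U (nhds (f x)) :=
        Filter.Tendsto.congr' (hstep.mono fun i hh => hh.symm) tendsto_const_nhds
      exact tendsto_nhds_unique (hF (x : M)) this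
end

section
/- Let M be a metric space, let N be a subset of M which is a local retract of M, fix a point x₀ ∈ N, and fix n ∈ ℕ. Then there exists a map T assigning to each Lipschitz function f : N → ℝⁿ with f(x₀) = 0 a function Tf : M → ℝⁿ such that: (i) Tf extends f, i.e. Tf(x) = f(x) for all x ∈ N; (ii) for every L ≥ 0, if f is L-Lipschitz then Tf is L-Lipschitz; (iii) T is linear, i.e. T(f+g)(x) = Tf(x) + Tg(x) and T(c·f)(x) = c·Tf(x) for all such Lipschitz functions f, g vanishing at x₀, all scalars c ∈ ℝ, and all x ∈ M. -/
open Filter Topology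

structure IsAsymptoticRetraction {M ι : Type*} [PseudoMetricSpace M] {N : Set M} (l : Filter ι)
    (ρ : ι → M → N) : Prop where
  eventually_eq : ∀ x : N, ∀ᶠ i in l, ρ i x = x
  eventually_dist_le : ∀ x y : M, ∀ ε > 0, ∀ᶠ i in l, dist (ρ i x) (ρ i y) ≤ (1 + ε) * dist x y

theorem IsLocalRetract.exists_isAsymptoticRetraction {M : Type*} [MetricSpace M] {N : Set M}
    (hN : IsLocalRetract N) {p : M} (hp : p ∈ N) :
    ∃ ρ : Finset M × ℕ → M → N, IsAsymptoticRetraction atTop ρ := by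
  classical
  choose r hrN hrfix hrlip using fun i : Finset M × ℕ => hN i.1 (1 / (i.2 + 1)) (by positivity)
  refine ⟨fun i x => if hx : x ∈ i.1 then ⟨r i x, hrN i x hx⟩ else ⟨p, hp⟩, ⟨?_, ?_⟩⟩
  · intro x
    filter_upwards [eventually_ge_atTop ({(x : M)}, 0)] with i hi
    have hx : (x : M) ∈ i.1 := hi.1 (Finset.mem_singleton_self _)
    simp only [dif_pos hx]
    exact Subtype.ext (hrfix i x hx x.2)
  · intro x y ε hε
    obtain ⟨k, hk⟩ := exists_nat_one_div_lt hε
    filter_upwards [eventually_ge_atTop ({x, y}, k)] with i hi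
    have hx : x ∈ i.1 := hi.1 (by simp)
    have hy : y ∈ i.1 := hi.1 (by simp)
    have hki : (k : ℝ) ≤ i.2 := by exact_mod_cast hi.2
    have hεi : 1 / ((i.2 : ℝ) + 1) ≤ ε :=
      (one_div_le_one_div_of_le (by positivity) (by linarith)).trans hk.le
    simp only [dif_pos hx, dif_pos hy, Subtype.dist_eq]
    exact (hrlip i x hx y hy).trans (by gcongr)

namespace IsAsymptoticRetraction

variable {M ι V : Type*} [PseudoMetricSpace M] {N : Set M} {l : Filter ι} {ρ : ι → M → N}

theorem eventually_dist_comp_le [PseudoMetricSpace V] (hρ : IsAsymptoticRetraction l ρ)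
    {K : NNReal} {f : N → V} (hf : LipschitzWith K f) (x y : M) {ε : ℝ} (hε : 0 < ε) :
    ∀ᶠ i in l, dist (f (ρ i x)) (f (ρ i y)) ≤ K * ((1 + ε) * dist x y) := by
  filter_upwards [hρ.eventually_dist_le x y ε hε] with i hi
  exact (hf.dist_le_mul _ _).trans (by gcongr)

end IsAsymptoticRetraction

section UltraExtend

variable {M ι V : Type*} [PseudoMetricSpace M] {N : Set M} [NormedAddCommGroup V]

noncomputable def ultraExtend (U : Ultrafilter ι) (ρ : ι → M → N) (f : N → V) (x : M) : V :=
  limUnder (U : Filter ι) fun i => f (ρ i x)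

variable {l : Filter ι} {ρ : ι → M → N} {U : Ultrafilter ι} {K : NNReal} {f g : N → V}

theorem tendsto_ultraExtend [ProperSpace V] (hρ : IsAsymptoticRetraction l ρ) (hU : ↑U ≤ l)
    (hf : LipschitzWith K f) (x : M) :
    Tendsto (fun i => f (ρ i x)) U (𝓝 (ultraExtend U ρ f x)) := by
  have : Nonempty ι := nonempty_of_neBot (U : Filter ι)
  set p : N := ρ (Classical.arbitrary ι) x
  have hbounded : ∀ᶠ i in (U : Filter ι),
      f (ρ i x) ∈ Metric.closedBall (f p) (K * ((1 + 1) * dist x p)) := by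
    filter_upwards [hU (hρ.eventually_dist_comp_le hf x p one_pos), hU (hρ.eventually_eq p)]
      with i hi hip
    rwa [hip] at hi
  obtain ⟨y, -, hy⟩ := (isCompact_closedBall _ _).ultrafilter_le_nhds' (U.map _) hbounded
  exact tendsto_nhds_limUnder ⟨y, hy⟩

theorem ultraExtend_coe (hρ : IsAsymptoticRetraction l ρ) (hU : ↑U ≤ l) (x : N) :
    ultraExtend U ρ f x = f x := by
  refine Tendsto.limUnder_eq (tendsto_const_nhds.congr' ?_)
  filter_upwards [hU (hρ.eventually_eq x)] with i hi
  rw [hi]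

theorem lipschitzWith_ultraExtend [ProperSpace V] (hρ : IsAsymptoticRetraction l ρ)
    (hU : ↑U ≤ l) (hf : LipschitzWith K f) : LipschitzWith K (ultraExtend U ρ f) := by
  refine LipschitzWith.of_dist_le_mul fun x y => ?_
  have hdist := (tendsto_ultraExtend hρ hU hf x).dist (tendsto_ultraExtend hρ hU hf y)
  have hle : ∀ ε > 0,
      dist (ultraExtend U ρ f x) (ultraExtend U ρ f y) ≤ K * ((1 + ε) * dist x y) :=
    fun ε hε => le_of_tendsto hdist (hU (hρ.eventually_dist_comp_le hf x y hε))
  have hlim : Tendsto (fun ε : ℝ => K * ((1 + ε) * dist x y)) (𝓝[>] 0) (𝓝 (K * dist x y)) := by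
    have hcont : Continuous fun ε : ℝ => (K : ℝ) * ((1 + ε) * dist x y) := by fun_prop
    refine tendsto_nhdsWithin_of_tendsto_nhds ?_
    convert hcont.tendsto 0 using 2
    ring
  exact ge_of_tendsto hlim (eventually_nhdsWithin_of_forall fun ε hε => hle ε hε)

theorem ultraExtend_add [ProperSpace V] (hρ : IsAsymptoticRetraction l ρ) (hU : ↑U ≤ l)
    {K' : NNReal} (hf : LipschitzWith K f) (hg : LipschitzWith K' g) (x : M) :
    ultraExtend U ρ (f + g) x = ultraExtend U ρ f x + ultraExtend U ρ g x :=
  ((tendsto_ultraExtend hρ hU hf x).add (tendsto_ultraExtend hρ hU hg x)).limUnder_eq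

theorem ultraExtend_smul [NormedSpace ℝ V] [ProperSpace V] (hρ : IsAsymptoticRetraction l ρ)
    (hU : ↑U ≤ l) (hf : LipschitzWith K f) (c : ℝ) (x : M) :
    ultraExtend U ρ (c • f) x = c • ultraExtend U ρ f x :=
  ((tendsto_ultraExtend hρ hU hf x).const_smul c).limUnder_eq

end UltraExtend

theorem stmt1 {M : Type*} [MetricSpace M] (N : Set M) (hN : IsLocalRetract N)
    (x₀ : M) (hx₀ : x₀ ∈ N) (n : ℕ) :
    ∃ T : (N → EuclideanSpace ℝ (Fin n)) → (M → EuclideanSpace ℝ (Fin n)),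
      -- (i) and (ii): `T f` extends `f` and preserves Lipschitz constants
      (∀ f : N → EuclideanSpace ℝ (Fin n),
        (∃ L : ℝ, ∀ x y : N, dist (f x) (f y) ≤ L * dist x y) → f ⟨x₀, hx₀⟩ = 0 →
          (∀ x : N, T f x = f x) ∧
          (∀ L : ℝ, 0 ≤ L → (∀ x y : N, dist (f x) (f y) ≤ L * dist x y) →
            ∀ x y : M, dist (T f x) (T f y) ≤ L * dist x y)) ∧
      -- (iii) additivity
      (∀ f g : N → EuclideanSpace ℝ (Fin n),
        (∃ L : ℝ, ∀ x y : N, dist (f x) (f y) ≤ L * dist x y) → f ⟨x₀, hx₀⟩ = 0 →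
        (∃ L : ℝ, ∀ x y : N, dist (g x) (g y) ≤ L * dist x y) → g ⟨x₀, hx₀⟩ = 0 →
          ∀ x : M, T (f + g) x = T f x + T g x) ∧
      -- (iii) homogeneity
      (∀ f : N → EuclideanSpace ℝ (Fin n),
        (∃ L : ℝ, ∀ x y : N, dist (f x) (f y) ≤ L * dist x y) → f ⟨x₀, hx₀⟩ = 0 →
          ∀ c : ℝ, ∀ x : M, T (c • f) x = c • T f x) := by
  classical
  obtain ⟨ρ, hρ⟩ := hN.exists_isAsymptoticRetraction hx₀
  have hU := Ultrafilter.of_le (atTop : Filter (Finset M × ℕ))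
  refine ⟨ultraExtend (Ultrafilter.of atTop) ρ, ?_, ?_, ?_⟩
  · rintro f - -
    refine ⟨ultraExtend_coe hρ hU, fun L' hL'0 hL' x y => ?_⟩
    have := (lipschitzWith_ultraExtend hρ hU (LipschitzWith.of_dist_le' hL')).dist_le_mul x y
    rwa [Real.coe_toNNReal _ hL'0] at this
  · rintro f g ⟨Lf, hf⟩ - ⟨Lg, hg⟩ - x
    exact ultraExtend_add hρ hU (LipschitzWith.of_dist_le' hf) (LipschitzWith.of_dist_le' hg) x
  · rintro f ⟨L, hf⟩ - c x
    exact ultraExtend_smul hρ hU (LipschitzWith.of_dist_le' hf) c x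
end

section
/- Let M be a metric space and let N be a subset of M which is a local retract of M. If N (with the induced metric) is a proper metric space, then N is a 1-Lipschitz retract of M, i.e. there exists a 1-Lipschitz map R : M → N with R(x) = x for every x ∈ N. -/
open Filter Topology Metric

theorem exists_ultrafilter_tendsto_of_eventually_mem_isCompact {ι α X : Type*}
    [TopologicalSpace X] {L : Filter ι} [L.NeBot] (g : ι → α → X)
    (hg : ∀ a, ∃ K, IsCompact K ∧ ∀ᶠ i in L, g i a ∈ K) :
    ∃ U : Ultrafilter ι, ↑U ≤ L ∧ ∃ G : α → X, ∀ a, Tendsto (g · a) U (𝓝 (G a)) := by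
  obtain ⟨U, hUL⟩ := Ultrafilter.exists_le L
  refine ⟨U, hUL, ?_⟩
  have hlim : ∀ a, ∃ x, Tendsto (g · a) U (𝓝 x) := fun a => by
    obtain ⟨K, hK, hgK⟩ := hg a
    obtain ⟨x, -, hx⟩ :=
      hK.ultrafilter_le_nhds (U.map (g · a)) (le_principal_iff.2 (hgK.filter_mono hUL))
    exact ⟨x, hx⟩
  choose G hG using hlim
  exact ⟨G, hG⟩

theorem dist_le_of_tendsto_of_eventually_dist_le {ι X : Type*} [PseudoMetricSpace X]
    {l : Filter ι} [l.NeBot] {f g : ι → X} {a b : X} {K : ι → ℝ} {d : ℝ}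
    (hf : Tendsto f l (𝓝 a)) (hg : Tendsto g l (𝓝 b)) (hK : Tendsto K l (𝓝 1))
    (h : ∀ᶠ i in l, dist (f i) (g i) ≤ K i * d) : dist a b ≤ d :=
  le_of_tendsto_of_tendsto (hf.dist hg) (by simpa using hK.mul_const d) h

theorem isCompact_inter_closedBall_of_properSpace_coe {M : Type*} [PseudoMetricSpace M]
    (N : Set M) [ProperSpace N] {c : M} (hc : c ∈ N) (r : ℝ) : IsCompact (N ∩ closedBall c r) := by
  have := (isCompact_closedBall (⟨c, hc⟩ : N) r).image continuous_subtype_val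
  rwa [← isometry_subtype_coe.preimage_closedBall, Subtype.image_preimage_coe] at this

theorem isClosed_of_properSpace_coe {M : Type*} [MetricSpace M] {N : Set M} [ProperSpace N] :
    IsClosed N :=
  (completeSpace_coe_iff_isComplete.1 inferInstance).isClosed

theorem Finset.eventually_mem_fst_atTop {α β : Type*} [Preorder β] [Nonempty β] (a : α) :
    ∀ᶠ i : Finset α × β in atTop, a ∈ i.1 := by
  obtain ⟨b⟩ := ‹Nonempty β›
  filter_upwards [eventually_ge_atTop ({a}, b)] with i hi using hi.1 (mem_singleton_self a)

theorem IsLocalRetract.exists_eventually_approx {M : Type*} [MetricSpace M] {N : Set M}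
    (hN : IsLocalRetract N) :
    ∃ (g : Finset M × ℕ → M → M) (K : Finset M × ℕ → ℝ), Tendsto K atTop (𝓝 1) ∧
      (∀ x, ∀ᶠ i in atTop, g i x ∈ N) ∧ (∀ x ∈ N, ∀ᶠ i in atTop, g i x = x) ∧
      ∀ x y, ∀ᶠ i in atTop, dist (g i x) (g i y) ≤ K i * dist x y := by
  choose r hrN hfix hlip using fun i : Finset M × ℕ => hN i.1 (1 / (i.2 + 1)) (by positivity)
  refine ⟨r, fun i => 1 + 1 / (i.2 + 1), ?_, ?_, ?_, ?_⟩
  · rw [← prod_atTop_atTop_eq]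
    simpa using (tendsto_one_div_add_atTop_nhds_zero_nat.comp tendsto_snd).const_add (1 : ℝ)
  · intro x
    filter_upwards [Finset.eventually_mem_fst_atTop x] with i hx using hrN i x hx
  · intro x hxN
    filter_upwards [Finset.eventually_mem_fst_atTop x] with i hx using hfix i x hx hxN
  · intro x y
    filter_upwards [Finset.eventually_mem_fst_atTop x, Finset.eventually_mem_fst_atTop y]
      with i hx hy using hlip i x hx y hy

theorem stmt2 {M : Type*} [MetricSpace M] (N : Set M) (hN : IsLocalRetract N)
    (hproper : ProperSpace N) :
    ∃ R : M → M, (∀ x : M, R x ∈ N) ∧ (∀ x ∈ N, R x = x) ∧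
      ∀ x y : M, dist (R x) (R y) ≤ dist x y := by
  classical
  obtain ⟨g, K, hK, hgN, hfix, hlip⟩ := hN.exists_eventually_approx
  have hcompact : ∀ x, ∃ C, IsCompact C ∧ ∀ᶠ i in atTop, g i x ∈ C := fun x => by
    obtain ⟨j, hj⟩ := (hgN x).exists
    refine ⟨N ∩ closedBall (g j x) (2 * dist x (g j x)),
      isCompact_inter_closedBall_of_properSpace_coe N hj _, ?_⟩
    filter_upwards [hgN x, hfix _ hj, hlip x (g j x), hK.eventually (ge_mem_nhds one_lt_two)]
      with i hxN hfixi hlipi hKi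
    refine ⟨hxN, mem_closedBall.2 ?_⟩
    calc dist (g i x) (g j x) = dist (g i x) (g i (g j x)) := by rw [hfixi]
      _ ≤ K i * dist x (g j x) := hlipi
      _ ≤ 2 * dist x (g j x) := by gcongr
  obtain ⟨U, hUL, R, hR⟩ := exists_ultrafilter_tendsto_of_eventually_mem_isCompact g hcompact
  refine ⟨R, fun x => ?_, fun x hx => tendsto_nhds_unique (hR x) ?_, fun x y => ?_⟩
  · exact isClosed_of_properSpace_coe.mem_of_tendsto (hR x) ((hgN x).filter_mono hUL)
  · exact tendsto_const_nhds.congr' (((hfix x hx).filter_mono hUL).mono fun _ h => h.symm)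
  · exact dist_le_of_tendsto_of_eventually_dist_le (hR x) (hR y) (hK.mono_left hUL)
      ((hlip x y).filter_mono hUL)
end

section
/- Let X be a real Banach space and let Y be a closed linear subspace of X which is locally complemented in X. Then Y is a local retract of X (viewing X as a metric space with the norm-induced distance). -/
/-- A closed subspace `Y` of a Banach space `X` is locally complemented in `X` if for
every finite-dimensional subspace `E` of `X` and every `ε > 0` there is a linear map
`T : E → Y` fixing `E ∩ Y` with `‖T x‖ ≤ (1+ε) ‖x‖` for all `x ∈ E`. -/
def LocallyComplemented {X : Type*} [NormedAddCommGroup X] [NormedSpace ℝ X]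
    (Y : Submodule ℝ X) : Prop :=
  ∀ E : Submodule ℝ X, FiniteDimensional ℝ E → ∀ ε : ℝ, 0 < ε →
    ∃ T : E →ₗ[ℝ] X, (∀ e : E, T e ∈ Y) ∧ (∀ e : E, (e : X) ∈ Y → T e = e) ∧
      ∀ e : E, ‖T e‖ ≤ (1 + ε) * ‖(e : X)‖

theorem stmt3 {X : Type*} [NormedAddCommGroup X] [NormedSpace ℝ X] [CompleteSpace X]
    (Y : Submodule ℝ X) (hYc : IsClosed (Y : Set X))
    (hY : LocallyComplemented Y) :
    IsLocalRetract (Y : Set X) := by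
  classical
  intro E ε hε
  set V : Submodule ℝ X := Submodule.span ℝ (E : Set X) with hV
  have hfd : FiniteDimensional ℝ V := by
    apply FiniteDimensional.span_of_finite
    exact E.finite_toSet
  obtain ⟨T, hTY, hTfix, hTnorm⟩ := hY V hfd ε hε
  have hmem : ∀ x ∈ E, x ∈ V := fun x hx =>
    Submodule.subset_span (by exact_mod_cast hx)
  refine ⟨fun x => if h : x ∈ V then T ⟨x, h⟩ else 0, ?_, ?_, ?_⟩
  · intro x hx
    simp only [dif_pos (hmem x hx)]
    exact hTY _
  · intro e he heY
    simp only [dif_pos (hmem e he)]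
    exact hTfix ⟨e, hmem e he⟩ heY
  · intro x hx y hy
    simp only [dif_pos (hmem x hx), dif_pos (hmem y hy), dist_eq_norm]
    have : T ⟨x, hmem x hx⟩ - T ⟨y, hmem y hy⟩ = T (⟨x, hmem x hx⟩ - ⟨y, hmem y hy⟩) := by
      rw [map_sub]
    rw [this]
    exact hTnorm _
end

section
/- Let X be a real Banach space and let Y be a closed linear subspace of X which is an almost isometric ideal in X. Then Y is an almost isometric local retract of X (viewing X as a metric space with the norm-induced distance). -/
/-- A subset `N` of a metric space `M` is an almost isometric local retract of `M` if for
every finite subset `E` of `M` and every `ε > 0` there exists a map `r : E → N` fixing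
every point of `E ∩ N` with `(1-ε) d(x,y) ≤ d(r x, r y) ≤ (1+ε) d(x,y)` on `E`. -/
def IsAILocalRetract {M : Type*} [MetricSpace M] (N : Set M) : Prop :=
  ∀ E : Finset M, ∀ ε : ℝ, 0 < ε →
    ∃ r : M → M, (∀ x ∈ E, r x ∈ N) ∧ (∀ e ∈ E, e ∈ N → r e = e) ∧
      ∀ x ∈ E, ∀ y ∈ E,
        (1 - ε) * dist x y ≤ dist (r x) (r y) ∧
          dist (r x) (r y) ≤ (1 + ε) * dist x y

/-- A closed subspace `Y` of a Banach space `X` is an almost isometric ideal in `X` if for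
every finite-dimensional subspace `E` of `X` and every `ε > 0` there is a linear map
`T : E → Y` fixing `E ∩ Y` with `(1-ε)‖x‖ ≤ ‖T x‖ ≤ (1+ε)‖x‖` for all `x ∈ E`. -/
def AlmostIsometricIdeal {X : Type*} [NormedAddCommGroup X] [NormedSpace ℝ X]
    (Y : Submodule ℝ X) : Prop :=
  ∀ E : Submodule ℝ X, FiniteDimensional ℝ E → ∀ ε : ℝ, 0 < ε →
    ∃ T : E →ₗ[ℝ] X, (∀ e : E, T e ∈ Y) ∧ (∀ e : E, (e : X) ∈ Y → T e = e) ∧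
      ∀ e : E, (1 - ε) * ‖(e : X)‖ ≤ ‖T e‖ ∧ ‖T e‖ ≤ (1 + ε) * ‖(e : X)‖

theorem stmt4 {X : Type*} [NormedAddCommGroup X] [NormedSpace ℝ X] [CompleteSpace X]
    (Y : Submodule ℝ X) (hYc : IsClosed (Y : Set X))
    (hY : AlmostIsometricIdeal Y) :
    IsAILocalRetract (Y : Set X) := by
  intro E ε hε
  set F : Submodule ℝ X := Submodule.span ℝ (E : Set X) with hF
  haveI : FiniteDimensional ℝ F := FiniteDimensional.span_of_finite ℝ E.finite_toSet
  obtain ⟨T, hTY, hTfix, hTnorm⟩ := hY F inferInstance ε hε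
  classical
  refine ⟨fun x => if h : x ∈ F then T ⟨x, h⟩ else 0, ?_, ?_, ?_⟩
  · intro x hx
    have hxF : x ∈ F := Submodule.subset_span hx
    beta_reduce
    rw [dif_pos hxF]
    exact hTY _
  · intro e he heY
    have heF : e ∈ F := Submodule.subset_span he
    beta_reduce
    rw [dif_pos heF]
    exact hTfix _ heY
  · intro x hx y hy
    have hxF : x ∈ F := Submodule.subset_span hx
    have hyF : y ∈ F := Submodule.subset_span hy
    beta_reduce
    rw [dif_pos hxF, dif_pos hyF]
    have hsub : T ⟨x, hxF⟩ - T ⟨y, hyF⟩ = T (⟨x, hxF⟩ - ⟨y, hyF⟩) := (map_sub T _ _).symm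
    have := hTnorm (⟨x, hxF⟩ - ⟨y, hyF⟩)
    simp only [dist_eq_norm, hsub]
    simpa using this
end

section
/- Let M be a complete metric space which has the approximate midpoint property, and let N be a closed subset of M which is a local retract of M. Then N has the approximate midpoint property, i.e. for all x, y ∈ N and every ε > 0 there exists z ∈ N with d(x,z) ≤ d(x,y)/2 + ε and d(y,z) ≤ d(x,y)/2 + ε. -/
theorem stmt6 {M : Type*} [MetricSpace M] [CompleteSpace M]
    (hmid : ∀ x y : M, ∀ ε : ℝ, 0 < ε →
      ∃ z : M, dist x z ≤ dist x y / 2 + ε ∧ dist y z ≤ dist x y / 2 + ε)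
    (N : Set M) (hNc : IsClosed N) (hN : IsLocalRetract N) :
    ∀ x ∈ N, ∀ y ∈ N, ∀ ε : ℝ, 0 < ε →
      ∃ z ∈ N, dist x z ≤ dist x y / 2 + ε ∧ dist y z ≤ dist x y / 2 + ε := by
  classical
  intro x hx y hy ε hε
  set D := dist x y with hD
  have hD0 : 0 ≤ D := dist_nonneg
  have hpos : 0 < D / 2 + ε / 2 := by positivity
  set ε' : ℝ := (ε / 2) / (D / 2 + ε / 2) with hε'
  have hε'0 : 0 < ε' := by positivity
  obtain ⟨m, hm1, hm2⟩ := hmid x y (ε / 2) (by positivity)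
  obtain ⟨r, hr1, hr2, hr3⟩ := hN {x, y, m} ε' hε'0
  have hxE : x ∈ ({x, y, m} : Finset M) := by simp
  have hyE : y ∈ ({x, y, m} : Finset M) := by simp
  have hmE : m ∈ ({x, y, m} : Finset M) := by simp
  refine ⟨r m, hr1 m hmE, ?_, ?_⟩
  · have h1 : dist (r x) (r m) ≤ (1 + ε') * dist x m := hr3 x hxE m hmE
    rw [hr2 x hxE hx] at h1
    have key : (1 + ε') * (D / 2 + ε / 2) ≤ D / 2 + ε := by
      have : ε' * (D / 2 + ε / 2) = ε / 2 := by
        rw [hε']; field_simp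
      nlinarith
    calc dist x (r m) ≤ (1 + ε') * dist x m := h1
      _ ≤ (1 + ε') * (D / 2 + ε / 2) := by
          apply mul_le_mul_of_nonneg_left hm1 (by linarith)
      _ ≤ D / 2 + ε := key
  · have h1 : dist (r y) (r m) ≤ (1 + ε') * dist y m := hr3 y hyE m hmE
    rw [hr2 y hyE hy] at h1
    have key : (1 + ε') * (D / 2 + ε / 2) ≤ D / 2 + ε := by
      have : ε' * (D / 2 + ε / 2) = ε / 2 := by
        rw [hε']; field_simp
      nlinarith
    calc dist y (r m) ≤ (1 + ε') * dist y m := h1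
      _ ≤ (1 + ε') * (D / 2 + ε / 2) := by
          apply mul_le_mul_of_nonneg_left (by rw [dist_comm] at hm2 ⊢; exact hm2) (by linarith)
      _ ≤ D / 2 + ε := key
end

section
/- Let M be a metric space, let N be a subset of M which is an almost isometric local retract of M, and let X be a proper metric space. Then for every isometric embedding f : N → X there exists an isometric embedding F : M → X such that F(x) = f(x) for every x ∈ N. -/
theorem stmt7 {M X : Type*} [MetricSpace M] [MetricSpace X] [ProperSpace X]
    (N : Set M) (hN : IsAILocalRetract N)
    (f : N → X) (hf : ∀ x y : N, dist (f x) (f y) = dist x y) :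
    ∃ F : M → X, (∀ x y : M, dist (F x) (F y) = dist x y) ∧
      ∀ x : N, F x = f x := by
  rcases isEmpty_or_nonempty M with hM | hM
  · exact ⟨fun x => isEmptyElim x, fun x => isEmptyElim x, fun x => isEmptyElim (x : M)⟩
  obtain ⟨m⟩ := hM
  classical
  -- N is nonempty
  obtain ⟨r₀, hr₀, -, -⟩ := hN {m} 1 one_pos
  have hn₀ : r₀ m ∈ N := hr₀ m (Finset.mem_singleton_self m)
  set n₀ : N := ⟨r₀ m, hn₀⟩ with hn₀def
  -- index set
  choose r hr1 hr2 hr3 using fun i : Finset M × ℕ =>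
    hN (insert (↑n₀) i.1) (1 / (i.2 + 1)) (by positivity)
  set g : Finset M × ℕ → M → X := fun i x =>
    if h : x ∈ insert (↑n₀ : M) i.1 then f ⟨r i x, hr1 i x h⟩ else f n₀ with hg
  have hmem : ∀ (i : Finset M × ℕ) (x : M), g i x ∈ Metric.closedBall (f n₀) (2 * dist x ↑n₀) := by
    intro i x
    simp only [hg]
    split_ifs with h
    · have hn₀mem : (↑n₀ : M) ∈ insert (↑n₀ : M) i.1 := Finset.mem_insert_self _ _
      have hfix : r i ↑n₀ = ↑n₀ := hr2 i ↑n₀ hn₀mem n₀.2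
      have hb := (hr3 i x h ↑n₀ hn₀mem).2
      rw [hfix] at hb
      have hε : (1 : ℝ) / (i.2 + 1) ≤ 1 := by
        rw [div_le_one (by positivity)]; linarith [Nat.cast_nonneg (α := ℝ) i.2]
      have hd : dist (r i x) (↑n₀ : M) ≤ 2 * dist x ↑n₀ := by
        nlinarith [dist_nonneg (x := x) (y := (↑n₀ : M))]
      rw [Metric.mem_closedBall]
      calc dist (f ⟨r i x, hr1 i x h⟩) (f n₀) = dist (r i x) (↑n₀ : M) := hf _ _
        _ ≤ 2 * dist x ↑n₀ := hd
    · simp [dist_nonneg]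
  have hUne : (Filter.atTop : Filter (Finset M × ℕ)).NeBot := Filter.atTop_neBot
  set U : Ultrafilter (Finset M × ℕ) := Ultrafilter.of Filter.atTop with hUdef
  have hU : (U : Filter (Finset M × ℕ)) ≤ Filter.atTop := Ultrafilter.of_le _
  -- limit points
  have hFex : ∀ x : M, ∃ a ∈ Metric.closedBall (f n₀) (2 * dist x ↑n₀),
      (U.map fun i => g i x : Filter X) ≤ nhds a := by
    intro x
    refine (ProperSpace.isCompact_closedBall _ _).ultrafilter_le_nhds _ ?_
    rw [Filter.le_principal_iff, Ultrafilter.coe_map, Filter.mem_map]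
    exact Filter.univ_mem' fun i => hmem i x
  choose F hF1 hF2 using hFex
  have tendsto_F : ∀ x : M, Filter.Tendsto (fun i => g i x) (U : Filter (Finset M × ℕ)) (nhds (F x)) :=
    fun x => hF2 x
  -- eventually x ∈ i.1
  have hEv : ∀ x : M, ∀ᶠ i : Finset M × ℕ in Filter.atTop, x ∈ i.1 := by
    intro x
    filter_upwards [Filter.eventually_ge_atTop (({x} : Finset M), 0)] with i hi
    exact hi.1 (Finset.mem_singleton_self x)
  -- key: dist (g i x) (g i y) → dist x y along atTop
  have key : ∀ x y : M, Filter.Tendsto (fun i => dist (g i x) (g i y))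
      (Filter.atTop : Filter (Finset M × ℕ)) (nhds (dist x y)) := by
    intro x y
    have h0 : Filter.Tendsto (fun i : Finset M × ℕ => dist (g i x) (g i y) - dist x y)
        Filter.atTop (nhds 0) := by
      apply squeeze_zero_norm' (a := fun i : Finset M × ℕ => (1 / (i.2 + 1) : ℝ) * dist x y)
      · filter_upwards [hEv x, hEv y] with i hx hy
        have hx' : x ∈ insert (↑n₀ : M) i.1 := Finset.mem_insert_of_mem hx
        have hy' : y ∈ insert (↑n₀ : M) i.1 := Finset.mem_insert_of_mem hy
        have hb := hr3 i x hx' y hy'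
        have hgx : g i x = f ⟨r i x, hr1 i x hx'⟩ := dif_pos hx'
        have hgy : g i y = f ⟨r i y, hr1 i y hy'⟩ := dif_pos hy'
        rw [hgx, hgy, hf, Subtype.dist_eq, Real.norm_eq_abs, abs_le]
        constructor <;> nlinarith [hb.1, hb.2]
      · have h1 : Filter.Tendsto (fun i : Finset M × ℕ => i.2) (Filter.atTop : Filter (Finset M × ℕ))
            (Filter.atTop : Filter ℕ) := by
          rw [← Filter.prod_atTop_atTop_eq]
          exact Filter.tendsto_snd
        have h2 : Filter.Tendsto (fun n : ℕ => (1 / (n + 1) : ℝ)) Filter.atTop (nhds 0) :=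
          tendsto_one_div_add_atTop_nhds_zero_nat
        have := (h2.comp h1).mul_const (dist x y)
        simpa using this
    have := h0.add_const (dist x y)
    simpa using this
  refine ⟨F, ?_, ?_⟩
  · intro x y
    have h1 : Filter.Tendsto (fun i => dist (g i x) (g i y)) (U : Filter (Finset M × ℕ))
        (nhds (dist (F x) (F y))) := (tendsto_F x).dist (tendsto_F y)
    have h2 : Filter.Tendsto (fun i => dist (g i x) (g i y)) (U : Filter (Finset M × ℕ))
        (nhds (dist x y)) := (key x y).mono_left hU
    exact tendsto_nhds_unique h1 h2
  · intro x
    have h2 : Filter.Tendsto (fun i => g i x) (U : Filter (Finset M × ℕ)) (nhds (f x)) := by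
      apply Filter.Tendsto.mono_left _ hU
      have : ∀ᶠ i : Finset M × ℕ in Filter.atTop, g i (x : M) = f x := by
        filter_upwards [hEv (x : M)] with i hx
        have hx' : (x : M) ∈ insert (↑n₀ : M) i.1 := Finset.mem_insert_of_mem hx
        have : g i (x : M) = f ⟨r i (x : M), hr1 i _ hx'⟩ := dif_pos hx'
        rw [this]
        congr 1
        exact Subtype.ext (hr2 i (x : M) hx' x.2)
      have hEq : (fun i : Finset M × ℕ => g i (x : M)) =ᶠ[Filter.atTop] fun _ => f x := this
      exact Filter.Tendsto.congr' hEq.symm tendsto_const_nhds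
    exact tendsto_nhds_unique (tendsto_F (x : M)) h2
end

section
/- Let M be a complete metric space which has the approximate midpoint property and satisfies: for every finite family of closed balls B(x₁,δ₁), …, B(xₙ,δₙ) in M which pairwise intersect and every ε > 0, the intersection ∩ᵢ B(xᵢ, δᵢ + ε) is nonempty. Then M has the finite binary intersection property: every finite family of pairwise intersecting closed balls in M has nonempty intersection. -/
/-!
The approximate midpoint property makes open balls `B(x, a)` and `B(z, b)` meet as soon as
`d(x, z) < a + b`: cut the pair at an approximate midpoint, on the side of the larger radius,
and repeat; the ratio `d / (a + b - d)` roughly halves each time.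

Hence if `z` lies in every `B(xᵢ, δᵢ + r)`, the ball `B(z, 2r)` meets every `B(xᵢ, δᵢ)`.
Adjoining it to the family and applying the hypothesis with `ε = r / 2` gives a point of every
`B(xᵢ, δᵢ + r / 2)` within `3r` of `z`. Iterating with `r = 2⁻ᵏ` produces a Cauchy sequence
whose limit lies in every `B(xᵢ, δᵢ)`.
-/

open Metric Filter Topology

def HasApproxMidpoints (M : Type*) [PseudoMetricSpace M] : Prop :=
  ∀ x y : M, ∀ ε : ℝ, 0 < ε →
    ∃ z : M, dist x z ≤ dist x y / 2 + ε ∧ dist y z ≤ dist x y / 2 + ε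

namespace HasApproxMidpoints

variable {M : Type*} [PseudoMetricSpace M]

theorem ball_inter_ball_nonempty_of_lt_two_pow_mul (h : HasApproxMidpoints M) (n : ℕ) :
    ∀ {x z : M} {a b : ℝ}, 0 < a → 0 < b →
      dist x z < 2 ^ n * (a + b - dist x z) → (ball x a ∩ ball z b).Nonempty := by
  induction n with
  | zero =>
    intro x z a b ha hb hd
    rw [pow_zero, one_mul] at hd
    rcases lt_or_ge (dist x z) a with hza | hza
    · exact ⟨z, mem_ball'.2 hza, mem_ball_self hb⟩
    · exact ⟨x, mem_ball_self ha, mem_ball.2 (by linarith)⟩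
  | succ n ih =>
    intro x z a b ha hb hd
    wlog hba : b ≤ a generalizing x z a b
    · rw [Set.inter_comm]
      exact this hb ha (by rwa [dist_comm, add_comm b]) (le_of_not_ge hba)
    set d := dist x z with hd_def
    have hε : ∀ᶠ ε in 𝓝[>] (0 : ℝ),
        0 < ε ∧ ε < a - d / 2 ∧ d / 2 + ε < 2 ^ n * (a + b - d - 2 * ε) := by
      rw [pow_succ] at hd
      have hdab : 0 < a + b - d := pos_of_mul_pos_right (dist_nonneg.trans_lt hd) (by positivity)
      refine eventually_mem_nhdsWithin.and (nhdsWithin_le_nhds ?_)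
      refine (eventually_lt_nhds (by linarith)).and ?_
      exact ContinuousAt.eventually_lt (by fun_prop) (by fun_prop) (by linarith)
    obtain ⟨ε, hε0, hεa, hεn⟩ := hε.exists
    obtain ⟨m, hxm, hzm⟩ := h x z ε hε0
    rw [← hd_def] at hxm hzm
    obtain ⟨w, hmw, hzw⟩ := ih (x := m) (a := a - (d / 2 + ε)) (b := b) (by linarith) hb (by
      rw [dist_comm]
      calc dist z m ≤ d / 2 + ε := hzm
        _ < 2 ^ n * (a + b - d - 2 * ε) := hεn
        _ ≤ 2 ^ n * (a - (d / 2 + ε) + b - dist z m) :=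
          mul_le_mul_of_nonneg_left (by linarith) (by positivity))
    refine ⟨w, ?_, hzw⟩
    calc dist w x ≤ dist w m + dist m x := dist_triangle w m x
      _ < a - (d / 2 + ε) + (d / 2 + ε) := add_lt_add_of_lt_of_le hmw (by rwa [dist_comm])
      _ = a := by ring

theorem ball_inter_ball_nonempty (h : HasApproxMidpoints M) {x z : M} {a b : ℝ}
    (ha : 0 < a) (hb : 0 < b) (hd : dist x z < a + b) : (ball x a ∩ ball z b).Nonempty := by
  obtain ⟨n, hn⟩ := pow_unbounded_of_one_lt (dist x z / (a + b - dist x z)) one_lt_two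
  exact h.ball_inter_ball_nonempty_of_lt_two_pow_mul n ha hb <| by
    rwa [div_lt_iff₀ (by linarith)] at hn

theorem closedBall_inter_ball_nonempty (h : HasApproxMidpoints M) {x z : M} {a b : ℝ}
    (ha : 0 ≤ a) (hb : 0 < b) (hd : dist x z < a + b) :
    (closedBall x a ∩ ball z b).Nonempty := by
  rcases ha.eq_or_lt with rfl | ha
  · exact ⟨x, mem_closedBall_self le_rfl, mem_ball.2 (by linarith)⟩
  · exact (h.ball_inter_ball_nonempty ha hb hd).mono <|
      Set.inter_subset_inter_left _ ball_subset_closedBall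

end HasApproxMidpoints

theorem exists_seq_of_forall_exists_succ {α : Type*} {P : ℕ → α → Prop}
    {R : ℕ → α → α → Prop} (h0 : ∃ a, P 0 a)
    (hstep : ∀ k a, P k a → ∃ b, P (k + 1) b ∧ R k a b) :
    ∃ u : ℕ → α, ∀ k, P k (u k) ∧ R k (u k) (u (k + 1)) := by
  choose next hnext using hstep
  obtain ⟨a₀, ha₀⟩ := h0
  let v : ∀ k, {a // P k a} := fun k =>
    Nat.rec ⟨a₀, ha₀⟩ (fun k a => ⟨next k a.1 a.2, (hnext k a.1 a.2).1⟩) k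
  exact ⟨fun k => (v k).1, fun k => ⟨(v k).2, (hnext k _ (v k).2).2⟩⟩

section BallFamilies

variable {M : Type*} [PseudoMetricSpace M]

def ClosedBallsPairwiseMeet {ι : Type*} (x : ι → M) (δ : ι → ℝ) : Prop :=
  ∀ i j, (closedBall (x i) (δ i) ∩ closedBall (x j) (δ j)).Nonempty

variable (M) in
def HasApproxBallIntersection : Prop :=
  ∀ (n : ℕ) (x : Fin n → M) (δ : Fin n → ℝ), ClosedBallsPairwiseMeet x δ →
    ∀ ε : ℝ, 0 < ε → (⋂ i, closedBall (x i) (δ i + ε)).Nonempty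

variable {n : ℕ} {x : Fin n → M} {δ : Fin n → ℝ}

theorem ClosedBallsPairwiseMeet.nonneg {ι : Type*} {x : ι → M} {δ : ι → ℝ}
    (h : ClosedBallsPairwiseMeet x δ) (i : ι) : 0 ≤ δ i :=
  let ⟨_, hw, _⟩ := h i i
  dist_nonneg.trans hw

theorem ClosedBallsPairwiseMeet.cons (h : ClosedBallsPairwiseMeet x δ) {z : M} {r : ℝ}
    (hr : 0 ≤ r) (hz : ∀ i, (closedBall z r ∩ closedBall (x i) (δ i)).Nonempty) :
    ClosedBallsPairwiseMeet (Fin.cons z x : Fin (n + 1) → M) (Fin.cons r δ) := by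
  intro i j
  cases i using Fin.cases <;> cases j using Fin.cases <;>
    simp only [Fin.cons_zero, Fin.cons_succ]
  · exact ⟨z, by simp [hr]⟩
  · exact hz _
  · exact Set.inter_comm _ _ ▸ hz _
  · exact h _ _

theorem HasApproxBallIntersection.exists_near_mem_iInter_closedBall_add_half
    (hballs : HasApproxBallIntersection M) (hmid : HasApproxMidpoints M)
    (hpair : ClosedBallsPairwiseMeet x δ) {r : ℝ} (hr : 0 < r) {z : M}
    (hz : z ∈ ⋂ i, closedBall (x i) (δ i + r)) :
    ∃ z' ∈ ⋂ i, closedBall (x i) (δ i + r / 2), dist z z' ≤ 3 * r := by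
  have hmeet : ∀ i, (closedBall z (2 * r) ∩ closedBall (x i) (δ i)).Nonempty := fun i => by
    have hzi : dist (x i) z < δ i + 2 * r := by
      have := mem_closedBall'.1 (Set.mem_iInter.1 hz i)
      linarith
    obtain ⟨w, hwx, hwz⟩ :=
      hmid.closedBall_inter_ball_nonempty (hpair.nonneg i) (by positivity) hzi
    exact ⟨w, ball_subset_closedBall hwz, hwx⟩
  obtain ⟨z', hz'⟩ :=
    hballs (n + 1) _ _ (hpair.cons (by positivity) hmeet) (r / 2) (by positivity)
  rw [Set.mem_iInter] at hz'
  refine ⟨z', Set.mem_iInter.2 fun i => by simpa using hz' i.succ, ?_⟩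
  have := mem_closedBall'.1 (hz' 0)
  simp only [Fin.cons_zero] at this
  linarith

theorem HasApproxBallIntersection.iInter_closedBall_nonempty [CompleteSpace M]
    (hballs : HasApproxBallIntersection M) (hmid : HasApproxMidpoints M)
    (hpair : ClosedBallsPairwiseMeet x δ) : (⋂ i, closedBall (x i) (δ i)).Nonempty := by
  set S : ℕ → Set M := fun k => ⋂ i, closedBall (x i) (δ i + (1 / 2) ^ k)
  obtain ⟨u, hu⟩ :
      ∃ u : ℕ → M, ∀ k, u k ∈ S k ∧ dist (u k) (u (k + 1)) ≤ 3 * (1 / 2) ^ k := by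
    refine exists_seq_of_forall_exists_succ (P := fun k z => z ∈ S k)
      (R := fun k z z' => dist z z' ≤ 3 * (1 / 2) ^ k) ?_ fun k z hz => ?_
    · simpa [S] using hballs n x δ hpair 1 one_pos
    · simp only [S, pow_succ, mul_one_div]
      exact hballs.exists_near_mem_iInter_closedBall_add_half hmid hpair (by positivity) hz
  obtain ⟨z, hz⟩ := cauchySeq_tendsto_of_complete <|
    cauchySeq_of_le_geometric (1 / 2) 3 (by norm_num) fun k => (hu k).2
  refine ⟨z, Set.mem_iInter.2 fun i => mem_closedBall'.2 ?_⟩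
  have hδ : Tendsto (fun k : ℕ => δ i + (1 / 2 : ℝ) ^ k) atTop (𝓝 (δ i)) := by
    simpa using tendsto_const_nhds.add
      (tendsto_pow_atTop_nhds_zero_of_lt_one (by norm_num : (0 : ℝ) ≤ 1 / 2) (by norm_num))
  exact le_of_tendsto_of_tendsto' (tendsto_const_nhds.dist hz) hδ fun k =>
    mem_closedBall'.1 (Set.mem_iInter.1 (hu k).1 i)

end BallFamilies

theorem stmt9 {M : Type*} [MetricSpace M] [CompleteSpace M]
    (hmid : ∀ x y : M, ∀ ε : ℝ, 0 < ε →
      ∃ z : M, dist x z ≤ dist x y / 2 + ε ∧ dist y z ≤ dist x y / 2 + ε)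
    (hballs : ∀ (n : ℕ) (x : Fin n → M) (δ : Fin n → ℝ),
      (∀ i j, (Metric.closedBall (x i) (δ i) ∩ Metric.closedBall (x j) (δ j)).Nonempty) →
      ∀ ε : ℝ, 0 < ε → (⋂ i, Metric.closedBall (x i) (δ i + ε)).Nonempty) :
    ∀ (n : ℕ) (x : Fin n → M) (δ : Fin n → ℝ),
      (∀ i j, (Metric.closedBall (x i) (δ i) ∩ Metric.closedBall (x j) (δ j)).Nonempty) →
      (⋂ i, Metric.closedBall (x i) (δ i)).Nonempty :=
  fun _ _ _ hpair => HasApproxBallIntersection.iInter_closedBall_nonempty hballs hmid hpair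
end

section
/- Let M be a metric space which is finitely 1-injective. Then M is an absolute local retract: for every metric space X and every isometric embedding ι : M → X, the image ι(M) is a local retract of X. -/
/-- A metric space `M` is an absolute local retract if the image of any isometric
embedding of `M` into any metric space `X` is a local retract of `X`. -/
def IsAbsoluteLocalRetract (M : Type*) [MetricSpace M] : Prop :=
  ∀ (X : Type*) [MetricSpace X], ∀ ι : M → X,
    (∀ x y : M, dist (ι x) (ι y) = dist x y) → IsLocalRetract (Set.range ι)

/-- A metric space `M` is finitely `1`-injective if every `L`-Lipschitz map into `M` from
a subset of a finite metric space extends to an `L`-Lipschitz map on the whole space. -/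
def FinitelyOneInjective (M : Type*) [MetricSpace M] : Prop :=
  ∀ (X : Type*) [MetricSpace X] [Finite X], ∀ (Y : Set X) (L : ℝ), 0 ≤ L →
    ∀ f : Y → M, (∀ x y : Y, dist (f x) (f y) ≤ L * dist x y) →
      ∃ F : X → M, (∀ x y : X, dist (F x) (F y) ≤ L * dist x y) ∧ ∀ y : Y, F y = f y

theorem stmt11 {M : Type*} [MetricSpace M] (hM : FinitelyOneInjective M) :
    IsAbsoluteLocalRetract M := by
  intro X _ ι hι E ε hε
  classical
  set n := E.card with hn
  set e : Fin n ≃ {x // x ∈ E} := E.equivFin.symm with he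
  set g : ULift.{_} (Fin n) → X := fun i => ((e i.down : {x // x ∈ E}) : X) with hg
  have hginj : Function.Injective g := by
    intro a b hab
    have : e a.down = e b.down := Subtype.ext hab
    have := e.injective this
    cases a; cases b; simpa using this
  letI : MetricSpace (ULift.{_} (Fin n)) := MetricSpace.induced g hginj inferInstance
  have hdist : ∀ a b : ULift.{_} (Fin n), dist a b = dist (g a) (g b) := fun _ _ => rfl
  set Y : Set (ULift.{_} (Fin n)) := {i | g i ∈ Set.range ι} with hY
  have hf : ∀ y : Y, ι (Classical.choose y.2) = g (y : ULift.{_} (Fin n)) :=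
    fun y => Classical.choose_spec y.2
  obtain ⟨F, hF1, hF2⟩ := hM (ULift.{_} (Fin n)) Y 1 zero_le_one
    (fun y => Classical.choose y.2)
    (by
      intro x y
      rw [← hι, hf x, hf y, one_mul, Subtype.dist_eq, hdist])
  set idx : ∀ x, x ∈ E → ULift.{_} (Fin n) := fun x hx => ⟨e.symm ⟨x, hx⟩⟩ with hidx
  have hgidx : ∀ x (hx : x ∈ E), g (idx x hx) = x := by
    intro x hx
    simp [hg, hidx]
  refine ⟨fun x => if h : x ∈ E then ι (F (idx x h)) else x, ?_, ?_, ?_⟩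
  · intro x hx
    simp only [dif_pos hx]
    exact Set.mem_range_self _
  · intro x hx hrx
    simp only [dif_pos hx]
    have hmem : idx x hx ∈ Y := by rw [hY, Set.mem_setOf_eq, hgidx x hx]; exact hrx
    have h2 := hF2 ⟨idx x hx, hmem⟩
    rw [h2]
    rw [hf ⟨idx x hx, hmem⟩]
    exact hgidx x hx
  · intro x hx y hy
    simp only [dif_pos hx, dif_pos hy]
    rw [hι]
    calc dist (F (idx x hx)) (F (idx y hy)) ≤ 1 * dist (idx x hx) (idx y hy) := hF1 _ _
      _ = dist x y := by rw [one_mul, hdist, hgidx, hgidx]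
      _ ≤ (1 + ε) * dist x y := by nlinarith [dist_nonneg (x := x) (y := y)]
end

section
/- Let M be a complete metric space, let N be a closed subset of M, let D be a dense subset of M and let S be a dense subset of N with S ⊆ D. If S is a local retract of D (with the induced metric), then N is a local retract of M. -/
open Filter Topology

section

variable {M : Type*} [MetricSpace M]

theorem Finset.exists_pos_le_dist (E : Finset M) :
    ∃ δ > 0, ∀ x ∈ E, ∀ y ∈ E, x ≠ y → δ ≤ dist x y := by
  have hsep : ∀ᶠ δ in 𝓝[>] (0 : ℝ), ∀ p ∈ E ×ˢ E, p.1 ≠ p.2 → δ ≤ dist p.1 p.2 := by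
    refine (eventually_all_finset _).2 fun p _ => ?_
    by_cases hp : p.1 = p.2
    · exact .of_forall fun _ h => absurd hp h
    · filter_upwards [nhdsWithin_le_nhds (eventually_lt_nhds (dist_pos.2 hp))] with δ hδ _
      exact hδ.le
  obtain ⟨δ, hδ, hδ0⟩ := (hsep.and self_mem_nhdsWithin).exists
  exact ⟨δ, hδ0, fun x hx y hy hxy => hδ (x, y) (Finset.mem_product.2 ⟨hx, hy⟩) hxy⟩

theorem dist_le_dist_add_of_dist_le {a b a' b' : M} {δ : ℝ} (ha : dist a a' ≤ δ)
    (hb : dist b b' ≤ δ) : dist a b ≤ dist a' b' + 2 * δ := by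
  linarith [dist_triangle4 a a' b' b, dist_comm b b']

theorem exists_near_mem_of_dense {N D S : Set M} (hD : Dense D) (hSD : S ⊆ D)
    (hNS : N ⊆ closure S) {δ : ℝ} (hδ : 0 < δ) (x : M) :
    ∃ d : D, dist x d < δ ∧ (x ∈ N → (d : M) ∈ S) := by
  by_cases hx : x ∈ N
  · obtain ⟨s, hs, hxs⟩ := Metric.mem_closure_iff.1 (hNS hx) δ hδ
    exact ⟨⟨s, hSD hs⟩, hxs, fun _ => hs⟩
  · obtain ⟨d, hd, hxd⟩ := Metric.mem_closure_iff.1 (hD x) δ hδ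
    exact ⟨⟨d, hd⟩, hxd, fun h => absurd h hx⟩

theorem exists_retraction_dist_le_of_dense {N D S : Set M} (hD : Dense D) (hSD : S ⊆ D)
    (hSN : S ⊆ N) (hNS : N ⊆ closure S) (hS : IsLocalRetract (Subtype.val ⁻¹' S : Set D))
    (E : Finset M) {ε δ : ℝ} (hε : 0 < ε) (hδ : 0 < δ) :
    ∃ r : M → M, (∀ x ∈ E, r x ∈ N) ∧ (∀ e ∈ E, e ∈ N → r e = e) ∧
      ∀ x ∈ E, ∀ y ∈ E, dist (r x) (r y) ≤ (1 + ε) * dist x y + 2 * (2 + ε) * δ := by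
  classical
  choose g hgδ hgS using exists_near_mem_of_dense hD hSD hNS hδ
  obtain ⟨r', hr'S, hr'fix, hr'lip⟩ := hS (E.image g) ε hε
  have hgE : ∀ x ∈ E, g x ∈ E.image g := fun x hx => Finset.mem_image_of_mem g hx
  set r : M → M := fun x => if x ∈ N then x else r' (g x)
  have hr : ∀ x ∈ E, dist (r x) (r' (g x)) ≤ δ := by
    intro x hx
    by_cases hxN : x ∈ N
    · simp only [r, if_pos hxN, hr'fix (g x) (hgE x hx) (hgS x hxN)]
      exact (hgδ x).le
    · simp [r, hxN, hδ.le]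
  refine ⟨r, fun x hx => ?_, fun e _ he => if_pos he, fun x hx y hy => ?_⟩
  · by_cases hxN : x ∈ N
    · simp [r, hxN]
    · simpa [r, hxN] using hSN (hr'S (g x) (hgE x hx))
  · have hlip : dist (r' (g x) : M) (r' (g y)) ≤ (1 + ε) * dist (g x : M) (g y) := by
      simpa only [Subtype.dist_eq] using hr'lip (g x) (hgE x hx) (g y) (hgE y hy)
    have hg : dist (g x : M) (g y) ≤ dist x y + 2 * δ :=
      dist_le_dist_add_of_dist_le (dist_comm x (g x) ▸ (hgδ x).le)
        (dist_comm y (g y) ▸ (hgδ y).le)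
    calc dist (r x) (r y) ≤ dist (r' (g x) : M) (r' (g y)) + 2 * δ :=
          dist_le_dist_add_of_dist_le (hr x hx) (hr y hy)
      _ ≤ (1 + ε) * (dist x y + 2 * δ) + 2 * δ := by grw [hlip, hg]
      _ = (1 + ε) * dist x y + 2 * (2 + ε) * δ := by ring

end

theorem stmt14_general {M : Type*} [MetricSpace M]
    (N : Set M) (D : Set M) (hD : Dense D)
    (S : Set M) (hSD : S ⊆ D) (hSN : S ⊆ N) (hSdense : N ⊆ closure S)
    (hS : IsLocalRetract (Subtype.val ⁻¹' S : Set ↥D)) :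
    IsLocalRetract N := by
  intro E ε hε
  obtain ⟨δ₀, hδ₀, hsep⟩ := E.exists_pos_le_dist
  set δ := ε / 2 * δ₀ / (2 * (2 + ε / 2))
  have hδ : 0 < δ := by positivity
  obtain ⟨r, hrN, hrfix, hrdist⟩ :=
    exists_retraction_dist_le_of_dense hD hSD hSN hSdense hS E (half_pos hε) hδ
  refine ⟨r, hrN, hrfix, fun x hx y hy => ?_⟩
  rcases eq_or_ne x y with rfl | hxy
  · simp
  have herr : 2 * (2 + ε / 2) * δ ≤ ε / 2 * dist x y := by
    have : 2 * (2 + ε / 2) * δ = ε / 2 * δ₀ := by simp only [δ]; field_simp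
    rw [this]
    gcongr
    exact hsep x hx y hy hxy
  linarith [hrdist x hx y hy]

theorem stmt14 {M : Type*} [MetricSpace M] [CompleteSpace M]
    (N : Set M) (hNc : IsClosed N) (D : Set M) (hD : Dense D)
    (S : Set M) (hSD : S ⊆ D) (hSN : S ⊆ N) (hSdense : N ⊆ closure S)
    (hS : IsLocalRetract (Subtype.val ⁻¹' S : Set ↥D)) :
    IsLocalRetract N :=
  stmt14_general N D hD S hSD hSN hSdense hS
end

section
/- Let M be a complete metric space, let N be a closed subset of M, let D be a dense subset of M and let S be a dense subset of N with S ⊆ D. If S is an almost isometric local retract of D (with the induced metric), then N is an almost isometric local retract of M. -/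
theorem stmt15 {M : Type*} [MetricSpace M] [CompleteSpace M]
    (N : Set M) (hNc : IsClosed N) (D : Set M) (hD : Dense D)
    (S : Set M) (hSD : S ⊆ D) (hSN : S ⊆ N) (hSdense : N ⊆ closure S)
    (hS : IsAILocalRetract (Subtype.val ⁻¹' S : Set ↥D)) :
    IsAILocalRetract N := by
  classical
  intro E ε hε
  rcases E.eq_empty_or_nonempty with hE | hE
  · exact ⟨id, by simp [hE], by simp [hE], by simp [hE]⟩
  -- minimal positive distance
  obtain ⟨d0, hd0pos, hd0⟩ : ∃ d0 : ℝ, 0 < d0 ∧ ∀ x ∈ E, ∀ y ∈ E, x ≠ y → d0 ≤ dist x y := by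
    by_cases hF : ((E ×ˢ E).filter fun p => p.1 ≠ p.2).Nonempty
    · refine ⟨((E ×ˢ E).filter fun p => p.1 ≠ p.2).inf' hF fun p => dist p.1 p.2, ?_, ?_⟩
      · refine (Finset.lt_inf'_iff hF).mpr fun p hp => ?_
        simp only [Finset.mem_filter, Finset.mem_product] at hp
        exact dist_pos.mpr hp.2
      · intro x hx y hy hxy
        have hmem : (x, y) ∈ (E ×ˢ E).filter fun p => p.1 ≠ p.2 := by
          rw [Finset.mem_filter, Finset.mem_product]; exact ⟨⟨hx, hy⟩, hxy⟩
        exact Finset.inf'_le (fun p => dist p.1 p.2) hmem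
    · refine ⟨1, one_pos, fun x hx y hy hxy => absurd ⟨(x, y), ?_⟩ hF⟩
      rw [Finset.mem_filter, Finset.mem_product]; exact ⟨⟨hx, hy⟩, hxy⟩
  set ε'' : ℝ := min ε 1 with hε''def
  have hε''pos : 0 < ε'' := lt_min hε one_pos
  have hε''le : ε'' ≤ ε := min_le_left _ _
  have hε''le1 : ε'' ≤ 1 := min_le_right _ _
  set δ : ℝ := ε'' * d0 / 12 with hδdef
  have hδpos : 0 < δ := by positivity
  set ε' : ℝ := ε'' / 2 with hε'def
  have hε'pos : 0 < ε' := by positivity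
  -- choose approximations
  have hex : ∀ e : M, ∃ p : ↥D, e ∈ E → dist e ↑p < δ ∧ (e ∈ N → (p : M) ∈ S) := by
    intro e
    by_cases heN : e ∈ N
    · obtain ⟨s, hsS, hs⟩ := Metric.mem_closure_iff.mp (hSdense heN) δ hδpos
      exact ⟨⟨s, hSD hsS⟩, fun _ => ⟨hs, fun _ => hsS⟩⟩
    · obtain ⟨p, hpD, hp⟩ := hD.exists_dist_lt e hδpos
      exact ⟨⟨p, hpD⟩, fun _ => ⟨hp, fun h => absurd h heN⟩⟩
  choose a ha using hex
  set E' : Finset ↥D := E.image a with hE'def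
  obtain ⟨r', hr'1, hr'2, hr'3⟩ := hS E' ε' hε'pos
  set r : M → M := fun x => if x ∈ N then x else ↑(r' (a x)) with hrdef
  have haE' : ∀ e ∈ E, a e ∈ E' := fun e he => Finset.mem_image_of_mem a he
  -- r' fixes a e for e ∈ E ∩ N
  have hfix : ∀ e ∈ E, e ∈ N → r' (a e) = a e := fun e he heN =>
    hr'2 (a e) (haE' e he) ((ha e he).2 heN)
  have hclose : ∀ x ∈ E, dist (r x) ↑(r' (a x)) ≤ δ := by
    intro x hx
    by_cases hxN : x ∈ N
    · simp only [hrdef, if_pos hxN, hfix x hx hxN]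
      exact le_of_lt (ha x hx).1
    · simp [hrdef, if_neg hxN]
      exact le_of_lt hδpos
  refine ⟨r, ?_, ?_, ?_⟩
  · intro x hx
    by_cases hxN : x ∈ N
    · simpa [hrdef, if_pos hxN] using hxN
    · simp only [hrdef, if_neg hxN]
      exact hSN (hr'1 (a x) (haE' x hx))
  · intro e _ heN
    simp [hrdef, if_pos heN]
  · intro x hx y hy
    rcases eq_or_ne x y with rfl | hxy
    · simp [dist_self]
    · have hd : d0 ≤ dist x y := hd0 x hx y hy hxy
      have hdist' := hr'3 (a x) (haE' x hx) (a y) (haE' y hy)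
      rw [Subtype.dist_eq, Subtype.dist_eq] at hdist'
      obtain ⟨hlow, hhigh⟩ := hdist'
      have hax : dist x ↑(a x) < δ := (ha x hx).1
      have hay : dist y ↑(a y) < δ := (ha y hy).1
      have hcx := hclose x hx
      have hcy := hclose y hy
      -- A close to dist x y
      have tA1 : dist (↑(a x) : M) ↑(a y) ≤ dist x y + 2 * δ := by
        have := dist_triangle4 (↑(a x) : M) x y ↑(a y)
        have h1 : dist (↑(a x) : M) x = dist x ↑(a x) := dist_comm _ _
        linarith
      have tA2 : dist x y ≤ dist (↑(a x) : M) ↑(a y) + 2 * δ := by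
        have := dist_triangle4 x (↑(a x) : M) ↑(a y) y
        have h1 : dist (↑(a y) : M) y = dist y ↑(a y) := dist_comm _ _
        linarith
      -- r close to B
      have tB1 : dist (r x) (r y) ≤ dist (↑(r' (a x)) : M) ↑(r' (a y)) + 2 * δ := by
        have := dist_triangle4 (r x) (↑(r' (a x)) : M) ↑(r' (a y)) (r y)
        have h1 : dist (↑(r' (a y)) : M) (r y) = dist (r y) ↑(r' (a y)) := dist_comm _ _
        linarith
      have tB2 : dist (↑(r' (a x)) : M) ↑(r' (a y)) ≤ dist (r x) (r y) + 2 * δ := by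
        have := dist_triangle4 (↑(r' (a x)) : M) (r x) (r y) ↑(r' (a y))
        have h1 : dist (↑(r' (a x)) : M) (r x) = dist (r x) ↑(r' (a x)) := dist_comm _ _
        linarith
      have hδd : 12 * δ = ε'' * d0 := by rw [hδdef]; ring
      have hεd : ε'' * d0 ≤ ε'' * dist x y := by
        exact mul_le_mul_of_nonneg_left hd (le_of_lt hε''pos)
      have hεε : ε'' * dist x y ≤ ε * dist x y :=
        mul_le_mul_of_nonneg_right hε''le dist_nonneg
      constructor
      · -- lower bound
        have h1 : (1 - ε') * (dist x y - 2 * δ) ≤ (1 - ε') * dist (↑(a x) : M) ↑(a y) := by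
          apply mul_le_mul_of_nonneg_left (by linarith) (by linarith [hε''le1])
        nlinarith
      · -- upper bound
        have h2 : (1 + ε') * dist (↑(a x) : M) ↑(a y) ≤ (1 + ε') * (dist x y + 2 * δ) := by
          apply mul_le_mul_of_nonneg_left tA1 (by linarith)
        nlinarith
end

section
/- Let M be a bounded complete metric space, let F be a finite subset of M, let k ∈ ℕ, and let ε be a real number with 0 < ε ≤ d(p,q) for all p ≠ q in F. Then there exists a finite subset Z of M with F ⊆ Z such that for every ε-separated subset E of M with F ⊆ E and card(E \ F) ≤ k, there is a map T : E → Z with T(f) = f for all f ∈ F and (1−ε)d(x,y) ≤ d(T(x),T(y)) ≤ (1+ε)d(x,y) for all x, y ∈ E. -/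
theorem stmt16 {M : Type*} [MetricSpace M] [CompleteSpace M]
    (hM : Bornology.IsBounded (Set.univ : Set M))
    (F : Finset M) (k : ℕ) (ε : ℝ) (hε : 0 < ε)
    (hsep : ∀ p ∈ F, ∀ q ∈ F, p ≠ q → ε ≤ dist p q) :
    ∃ Z : Finset M, F ⊆ Z ∧
      ∀ E : Finset M, F ⊆ E → (∀ x ∈ E, ∀ y ∈ E, x ≠ y → ε ≤ dist x y) →
        ((E : Set M) \ (F : Set M)).ncard ≤ k →
        ∃ T : M → M, (∀ x ∈ E, T x ∈ Z) ∧ (∀ f ∈ F, T f = f) ∧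
          ∀ x ∈ E, ∀ y ∈ E,
            (1 - ε) * dist x y ≤ dist (T x) (T y) ∧
              dist (T x) (T y) ≤ (1 + ε) * dist x y := by
  classical
  set ι : Type _ := Fin k ⊕ {f // f ∈ F} with hι
  set Φ : (ι → M) → (ι × ι → ℝ) := fun w p => dist (w p.1) (w p.2) with hΦ
  set s : Set (ι × ι → ℝ) :=
    {y | ∃ w : ι → M, (∀ f : {f // f ∈ F}, w (Sum.inr f) = (f : M)) ∧ Φ w = y} with hs
  -- s is bounded
  obtain ⟨C, hC⟩ := Metric.isBounded_iff.mp hM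
  have hsb : s ⊆ Metric.closedBall (0 : ι × ι → ℝ) (max C 0) := by
    rintro y ⟨w, -, rfl⟩
    rw [Metric.mem_closedBall, dist_pi_le_iff (le_max_right _ _)]
    intro p
    simp only [Φ, Pi.zero_apply, Real.dist_eq, sub_zero, abs_of_nonneg dist_nonneg]
    exact le_max_of_le_left (hC (Set.mem_univ _) (Set.mem_univ _))
  have hstb : TotallyBounded s :=
    ((isCompact_closedBall _ _).totallyBounded).subset hsb
  have hδ : (0 : ℝ) < ε * ε := mul_pos hε hε
  obtain ⟨t, hts, htfin, htcov⟩ :=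
    totallyBounded_iff_subset.mp hstb _ (Metric.dist_mem_uniformity hδ)
  -- choose witnesses
  have hW : ∀ y ∈ t, ∃ w : ι → M,
      (∀ f : {f // f ∈ F}, w (Sum.inr f) = (f : M)) ∧ Φ w = y := fun y hy => hts hy
  choose W hW1 hW2 using hW
  refine ⟨F ∪ htfin.toFinset.attach.biUnion (fun y =>
    Finset.image (fun i : Fin k => W y.1 (htfin.mem_toFinset.mp y.2) (Sum.inl i))
      Finset.univ), Finset.subset_union_left, ?_⟩
  intro E hFE hEsep hcard
  rcases E.eq_empty_or_nonempty with rfl | ⟨x0, hx0⟩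
  · exact ⟨id, by simp, fun f hf => rfl, by simp⟩
  -- enumerate E \ F
  have hcard' : (E \ F).card ≤ k := by
    rwa [← Finset.coe_sdiff, Set.ncard_coe_finset] at hcard
  set j : {x // x ∈ E \ F} → Fin k :=
    fun x => Fin.castLE hcard' ((E \ F).equivFin x) with hj
  have hjinj : Function.Injective j := by
    intro a b hab
    exact (E \ F).equivFin.injective (Fin.castLE_injective _ hab)
  set u : ι → M := fun i => match i with
    | Sum.inr f => (f : M)
    | Sum.inl i => if h : ∃ x : {x // x ∈ E \ F}, j x = i then (Classical.choose h).1
        else x0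
    with hu
  have huj : ∀ x : {x // x ∈ E \ F}, u (Sum.inl (j x)) = (x : M) := by
    intro x
    have h : ∃ x' : {x // x ∈ E \ F}, j x' = j x := ⟨x, rfl⟩
    have := Classical.choose_spec h
    have hx : u (Sum.inl (j x)) = (Classical.choose h).1 := dif_pos h
    rw [hx, hjinj this]
  have hus : Φ u ∈ s := ⟨u, fun f => rfl, rfl⟩
  obtain ⟨y, hyt, hy⟩ := Set.mem_iUnion₂.mp (htcov hus)
  have hyt' : y ∈ t := hyt
  set w : ι → M := W y hyt' with hw
  have hdist : ∀ p : ι × ι, dist (Φ u p) (Φ w p) < ε * ε := by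
    intro p
    have h1 : dist (Φ u) y < ε * ε := hy
    rw [hW2 y hyt']
    exact lt_of_le_of_lt (dist_le_pi_dist _ _ p) h1
  -- define T
  set T : M → M := fun x => if h : x ∈ E \ F then w (Sum.inl (j ⟨x, h⟩)) else x with hT
  have key : ∀ x ∈ E, ∃ i : ι, u i = x ∧ T x = w i := by
    intro x hx
    by_cases hxf : x ∈ E \ F
    · exact ⟨Sum.inl (j ⟨x, hxf⟩), huj ⟨x, hxf⟩, dif_pos hxf⟩
    · have hxF : x ∈ F := by
        by_contra h
        exact hxf (Finset.mem_sdiff.mpr ⟨hx, h⟩)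
      refine ⟨Sum.inr ⟨x, hxF⟩, rfl, ?_⟩
      have hTx : T x = x := dif_neg hxf
      rw [hTx]
      exact (hW1 y hyt' ⟨x, hxF⟩).symm
  refine ⟨T, ?_, ?_, ?_⟩
  · intro x hx
    by_cases hxf : x ∈ E \ F
    · have hTx : T x = w (Sum.inl (j ⟨x, hxf⟩)) := dif_pos hxf
      rw [hTx]
      refine Finset.mem_union_right _ (Finset.mem_biUnion.mpr
        ⟨⟨y, htfin.mem_toFinset.mpr hyt'⟩, Finset.mem_attach _ _, ?_⟩)
      exact Finset.mem_image.mpr ⟨j ⟨x, hxf⟩, Finset.mem_univ _, rfl⟩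
    · have hxF : x ∈ F := by
        by_contra h
        exact hxf (Finset.mem_sdiff.mpr ⟨hx, h⟩)
      have hTx : T x = x := dif_neg hxf
      rw [hTx]
      exact Finset.mem_union_left _ hxF
  · intro f hf
    have : f ∉ E \ F := fun h => (Finset.mem_sdiff.mp h).2 hf
    exact dif_neg this
  · intro x hx z hz
    obtain ⟨i, hui, hTi⟩ := key x hx
    obtain ⟨i', hui', hTi'⟩ := key z hz
    rcases eq_or_ne x z with rfl | hne
    · have : T x = T x := rfl
      simp [dist_self, dist_nonneg]
    · have hd : dist (Φ u (i, i')) (Φ w (i, i')) < ε * ε := hdist (i, i')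
      have hεd : ε ≤ dist x z := hEsep x hx z hz hne
      have h1 : Φ u (i, i') = dist x z := by simp [Φ, hui, hui']
      have h2 : Φ w (i, i') = dist (T x) (T z) := by simp [Φ, hTi, hTi']
      rw [h1, h2, Real.dist_eq, abs_lt] at hd
      constructor <;> nlinarith [hd.1, hd.2]
end

section
/- Let M be a metric space and let N be a separable subset of M. Then there exists a separable subset S of M with N ⊆ S such that S is an almost isometric local retract of M. -/
open TopologicalSpace

/-- Predicate: `w` realizes, within `1/(n+1)`, the rational distance matrix `q` together
with the anchor points `d` from the countable set `c`. -/
def aiP {M : Type*} [MetricSpace M] (c : Set M) (a b : ℕ) (d : Fin a → c)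
    (q : Fin (a+b) → Fin (a+b) → ℚ) (n : ℕ) (w : Fin b → M) : Prop :=
  ∀ i j, |dist (Fin.append (fun i => (d i : M)) w i) (Fin.append (fun i => (d i : M)) w j)
      - (q i j : ℝ)| ≤ 1/(n+1)

open Classical in
noncomputable def aiW {M : Type*} [MetricSpace M] (c : Set M) (a b : ℕ) (d : Fin a → c)
    (q : Fin (a+b) → Fin (a+b) → ℚ) (n : ℕ) : Set M :=
  if h : ∃ w, aiP c a b d q n w then Set.range h.choose else ∅

lemma aiW_spec {M : Type*} [MetricSpace M] {c : Set M} {a b : ℕ} {d : Fin a → c}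
    {q : Fin (a+b) → Fin (a+b) → ℚ} {n : ℕ} (h : ∃ w, aiP c a b d q n w) :
    ∃ w : Fin b → M, aiP c a b d q n w ∧ Set.range w ⊆ aiW c a b d q n := by
  refine ⟨h.choose, h.choose_spec, ?_⟩
  rw [aiW, dif_pos h]

lemma aiW_countable {M : Type*} [MetricSpace M] (c : Set M) (a b : ℕ) (d : Fin a → c)
    (q : Fin (a+b) → Fin (a+b) → ℚ) (n : ℕ) : (aiW c a b d q n).Countable := by
  rw [aiW]
  split
  · exact (Set.finite_range _).countable
  · exact Set.countable_empty

/-- One enrichment step: a separable set can be enlarged to a separable set into which any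
finite configuration can be mapped with small additive distortion, fixing the part in `T`. -/
lemma enrich {M : Type*} [MetricSpace M] (T : Set M) (hT : IsSeparable T) :
    ∃ T' : Set M, T ⊆ T' ∧ IsSeparable T' ∧
      ∀ E : Finset M, ∀ δ : ℝ, 0 < δ → ∃ r : M → M,
        (∀ x ∈ E, r x ∈ T') ∧ (∀ e ∈ E, e ∈ T → r e = e) ∧
        ∀ x ∈ E, ∀ y ∈ E, |dist (r x) (r y) - dist x y| ≤ δ := by
  classical
  obtain ⟨c, hc, hTc⟩ := hT
  have := hc.to_subtype
  refine ⟨T ∪ ⋃ a, ⋃ b, ⋃ d, ⋃ q, ⋃ n, aiW c a b d q n, Set.subset_union_left, ?_, ?_⟩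
  · refine IsSeparable.union ⟨c, hc, hTc⟩ (Set.Countable.isSeparable ?_)
    exact Set.countable_iUnion fun a => Set.countable_iUnion fun b =>
      Set.countable_iUnion fun d => Set.countable_iUnion fun q =>
      Set.countable_iUnion fun n => aiW_countable c a b d q n
  · intro E δ hδ
    obtain ⟨n, hn⟩ : ∃ n : ℕ, 1/((n:ℝ)+1) < δ/2 := exists_nat_one_div_lt (by linarith)
    set η : ℝ := 1/(3*((n:ℝ)+1)) with hηdef
    have hn1 : (0:ℝ) < (n:ℝ)+1 := by positivity
    have hηpos : 0 < η := by positivity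
    have hη3 : 3*η = 1/((n:ℝ)+1) := by rw [hηdef]; field_simp
    set F : Finset M := E.filter (· ∈ T) with hF
    set G : Finset M := E.filter (· ∉ T) with hG
    set a := F.card
    set b := G.card
    set eF : {x // x ∈ F} ≃ Fin a := F.equivFin
    set eG : {x // x ∈ G} ≃ Fin b := G.equivFin
    set f : Fin a → M := fun i => (eF.symm i : M) with hf
    set g : Fin b → M := fun j => (eG.symm j : M) with hg
    have hfT : ∀ i, f i ∈ T := fun i => (Finset.mem_filter.1 (eF.symm i).2).2
    have hgG : ∀ j, g j ∈ G := fun j => (eG.symm j).2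
    -- choose approximants in c
    have hex : ∀ i : Fin a, ∃ y ∈ c, dist (f i) y < η :=
      fun i => Metric.mem_closure_iff.1 (hTc (hfT i)) η hηpos
    choose d hdc hdη using hex
    set d' : Fin a → c := fun i => ⟨d i, hdc i⟩ with hd'
    set p : Fin (a+b) → M := Fin.append f g with hp
    have hexq : ∀ i j : Fin (a+b), ∃ q : ℚ, |dist (p i) (p j) - (q:ℝ)| < η :=
      fun i j => exists_rat_near _ hηpos
    choose q hq using hexq
    -- the witness set is nonempty: `g` itself works
    have hup : ∀ k, dist (Fin.append (fun i => (d' i : M)) g k) (p k) ≤ η := by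
      intro k
      refine Fin.addCases (fun k' => ?_) (fun k' => ?_) k
      · simp only [Fin.append_left, hp]
        rw [dist_comm]
        exact (hdη k').le
      · simp only [Fin.append_right, hp, dist_self]
        exact hηpos.le
    have hw : ∃ w, aiP c a b d' q n w := by
      refine ⟨g, fun i j => ?_⟩
      have h1 : |dist (Fin.append (fun i => (d' i : M)) g i)
          (Fin.append (fun i => (d' i : M)) g j) - dist (p i) (p j)| ≤ η + η := by
        have := dist_dist_dist_le (Fin.append (fun i => (d' i : M)) g i)
          (Fin.append (fun i => (d' i : M)) g j) (p i) (p j)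
        rw [Real.dist_eq] at this
        exact this.trans (add_le_add (hup i) (hup j))
      have h2 := (hq i j).le
      have t1 := abs_sub_le (dist (Fin.append (fun i => (d' i : M)) g i)
        (Fin.append (fun i => (d' i : M)) g j)) (dist (p i) (p j)) ((q i j : ℝ))
      linarith
    obtain ⟨w, hwP, hwsub⟩ := aiW_spec hw
    set p' : Fin (a+b) → M := Fin.append f w with hp'
    have hup' : ∀ k, dist (p' k) (Fin.append (fun i => (d' i : M)) w k) ≤ η := by
      intro k
      refine Fin.addCases (fun k' => ?_) (fun k' => ?_) k
      · simp only [Fin.append_left, hp']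
        exact (hdη k').le
      · simp only [Fin.append_right, hp', dist_self]
        exact hηpos.le
    have core : ∀ i j, |dist (p' i) (p' j) - dist (p i) (p j)| ≤ δ := by
      intro i j
      have h1 : |dist (p' i) (p' j) - dist (Fin.append (fun i => (d' i : M)) w i)
          (Fin.append (fun i => (d' i : M)) w j)| ≤ η + η := by
        have := dist_dist_dist_le (p' i) (p' j) (Fin.append (fun i => (d' i : M)) w i)
          (Fin.append (fun i => (d' i : M)) w j)
        rw [Real.dist_eq] at this
        exact this.trans (add_le_add (hup' i) (hup' j))
      have h2 := hwP i j
      have h3 : |(q i j : ℝ) - dist (p i) (p j)| ≤ η := by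
        rw [abs_sub_comm]; exact (hq i j).le
      have t1 := abs_sub_le (dist (p' i) (p' j))
        (dist (Fin.append (fun i => (d' i : M)) w i) (Fin.append (fun i => (d' i : M)) w j))
        (dist (p i) (p j))
      have t2 := abs_sub_le
        (dist (Fin.append (fun i => (d' i : M)) w i) (Fin.append (fun i => (d' i : M)) w j))
        ((q i j : ℝ)) (dist (p i) (p j))
      linarith
    -- the retraction
    set r : M → M := fun x => if hx : x ∈ G then w (eG ⟨x, hx⟩) else x with hr
    have hrG : ∀ x (hx : x ∈ G), r x = w (eG ⟨x, hx⟩) := fun x hx => dif_pos hx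
    have hrnG : ∀ x, x ∉ G → r x = x := fun x hx => dif_neg hx
    have helper : ∀ x ∈ E, ∃ k, p k = x ∧ p' k = r x := by
      intro x hx
      by_cases hxG : x ∈ G
      · refine ⟨Fin.natAdd a (eG ⟨x, hxG⟩), ?_, ?_⟩
        · simp only [hp, Fin.append_right, hg, Equiv.symm_apply_apply]
        · simp only [hp', Fin.append_right, hrG x hxG]
      · have hxT : x ∈ T := by
          by_contra hxT
          exact hxG (Finset.mem_filter.2 ⟨hx, hxT⟩)
        have hxF : x ∈ F := Finset.mem_filter.2 ⟨hx, hxT⟩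
        refine ⟨Fin.castAdd b (eF ⟨x, hxF⟩), ?_, ?_⟩
        · simp only [hp, Fin.append_left, hf, Equiv.symm_apply_apply]
        · simp only [hp', Fin.append_left, hf, Equiv.symm_apply_apply, hrnG x hxG]
    refine ⟨r, ?_, ?_, ?_⟩
    · intro x hx
      by_cases hxG : x ∈ G
      · rw [hrG x hxG]
        right
        refine Set.mem_iUnion.2 ⟨a, Set.mem_iUnion.2 ⟨b, Set.mem_iUnion.2 ⟨d',
          Set.mem_iUnion.2 ⟨q, Set.mem_iUnion.2 ⟨n, hwsub ⟨_, rfl⟩⟩⟩⟩⟩⟩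
      · rw [hrnG x hxG]
        left
        by_contra hxT
        exact hxG (Finset.mem_filter.2 ⟨hx, hxT⟩)
    · intro e he heT
      exact hrnG e (fun hG' => (Finset.mem_filter.1 hG').2 heT)
    · intro x hx y hy
      obtain ⟨k, hk1, hk2⟩ := helper x hx
      obtain ⟨l, hl1, hl2⟩ := helper y hy
      rw [← hk2, ← hl2, ← hk1, ← hl1]
      exact core k l

theorem stmt17 {M : Type*} [MetricSpace M] (N : Set M)
    (hN : TopologicalSpace.IsSeparable N) :
    ∃ S : Set M, N ⊆ S ∧ TopologicalSpace.IsSeparable S ∧ IsAILocalRetract S := by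
  classical
  have key := fun (t : {S : Set M // IsSeparable S}) => enrich t.1 t.2
  let step : {S : Set M // IsSeparable S} → {S : Set M // IsSeparable S} :=
    fun t => ⟨(key t).choose, ((key t).choose_spec).2.1⟩
  let seq : ℕ → {S : Set M // IsSeparable S} := fun k => step^[k] ⟨N, hN⟩
  have hsucc : ∀ k, seq (k+1) = step (seq k) := fun k => Function.iterate_succ_apply' step k _
  have hsub : ∀ k, (seq k : Set M) ⊆ (seq (k+1) : Set M) := by
    intro k
    rw [hsucc k]
    exact ((key (seq k)).choose_spec).1
  have hmono : ∀ k l, k ≤ l → (seq k : Set M) ⊆ (seq l : Set M) := by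
    intro k l hkl
    induction l, hkl using Nat.le_induction with
    | base => exact subset_rfl
    | succ l hkl ih => exact ih.trans (hsub l)
  have hprop : ∀ k, ∀ E : Finset M, ∀ δ : ℝ, 0 < δ → ∃ r : M → M,
      (∀ x ∈ E, r x ∈ (seq (k+1) : Set M)) ∧ (∀ e ∈ E, e ∈ (seq k : Set M) → r e = e) ∧
      ∀ x ∈ E, ∀ y ∈ E, |dist (r x) (r y) - dist x y| ≤ δ := by
    intro k
    rw [hsucc k]
    exact ((key (seq k)).choose_spec).2.2
  refine ⟨⋃ k, (seq k : Set M), ?_, ?_, ?_⟩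
  · exact Set.subset_iUnion (fun k => ((seq k : Set M))) 0
  · exact isSeparable_iUnion.2 fun k => (seq k).2
  · intro E ε hε
    -- find a level containing all points of E that lie in S
    set ES : Finset M := E.filter (· ∈ ⋃ k, (seq k : Set M)) with hES
    have hexk : ∀ x : {x // x ∈ ES}, ∃ k, (x : M) ∈ (seq k : Set M) := by
      intro x
      exact Set.mem_iUnion.1 (Finset.mem_filter.1 x.2).2
    choose ix hix using hexk
    set n₀ : ℕ := ES.attach.sup ix with hn₀
    have hlev : ∀ x ∈ ES, x ∈ (seq n₀ : Set M) := by
      intro x hx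
      exact hmono _ _ (Finset.le_sup (Finset.mem_attach _ ⟨x, hx⟩)) (hix ⟨x, hx⟩)
    -- minimal positive distance
    set Dp : Finset ℝ := ((E ×ˢ E).filter fun p => p.1 ≠ p.2).image fun p => dist p.1 p.2
      with hDp
    set m : ℝ := if h : Dp.Nonempty then Dp.min' h else 1 with hm
    have hmpos : 0 < m := by
      rw [hm]
      split
      · rename_i h
        have hmm : Dp.min' h ∈ ((E ×ˢ E).filter fun p => p.1 ≠ p.2).image
            (fun p => dist p.1 p.2) := Dp.min'_mem h
        obtain ⟨pq, hpq, hd⟩ := Finset.mem_image.1 hmm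
        rw [← hd]
        exact dist_pos.2 (Finset.mem_filter.1 hpq).2
      · exact one_pos
    have hmle : ∀ x ∈ E, ∀ y ∈ E, x ≠ y → m ≤ dist x y := by
      intro x hx y hy hxy
      have hmem : dist x y ∈ Dp := by
        rw [hDp]
        exact Finset.mem_image.2 ⟨(x, y), Finset.mem_filter.2
          ⟨Finset.mem_product.2 ⟨hx, hy⟩, hxy⟩, rfl⟩
      rw [hm, dif_pos ⟨_, hmem⟩]
      exact Finset.min'_le _ _ hmem
    obtain ⟨r, hr1, hr2, hr3⟩ := hprop n₀ E (ε * m) (mul_pos hε hmpos)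
    refine ⟨r, fun x hx => Set.mem_iUnion.2 ⟨n₀+1, hr1 x hx⟩, ?_, ?_⟩
    · intro e he heS
      exact hr2 e he (hlev e (Finset.mem_filter.2 ⟨he, heS⟩))
    · intro x hx y hy
      by_cases hxy : x = y
      · subst hxy
        simp [dist_self]
      · have h1 := hr3 x hx y hy
        have h2 : ε * m ≤ ε * dist x y := by
          exact mul_le_mul_of_nonneg_left (hmle x hx y hy hxy) hε.le
        have h3 := abs_le.1 h1
        constructor <;> nlinarith [h3.1, h3.2]
end

section
/- Let M be a metric space, let N be a subset of M, and let A be an infinite dense subset of N (dense for the induced topology on N). Then there exists a subset S of M with N ⊆ S such that S is an almost isometric local retract of M and S has a dense subset of cardinality at most the cardinality of A. -/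
open Cardinal FirstOrder Language

section

variable {M : Type*} [MetricSpace M]

def IsAddAILocalRetract (S : Set M) : Prop :=
  ∀ (m : ℕ) (e : Fin m → M) (δ : ℝ), 0 < δ →
    ∃ w : Fin m → M, (∀ i, w i ∈ S) ∧ (∀ i, e i ∈ S → w i = e i) ∧
      ∀ i j, |dist (w i) (w j) - dist (e i) (e j)| ≤ δ

theorem Finset.exists_pos_forall_le_dist (E : Finset M) :
    ∃ μ > 0, ∀ x ∈ E, ∀ y ∈ E, x ≠ y → μ ≤ dist x y := by
  rcases (E : Set M).subsingleton_or_nontrivial with h | h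
  · exact ⟨1, one_pos, fun x hx y hy hxy => (hxy (h hx hy)).elim⟩
  · exact ⟨_, E.infsep_pos_iff_nontrivial.2 h, fun x hx y hy => Set.infsep_le_dist_of_mem hx hy⟩

theorem abs_dist_sub_dist_le_of_fixed {m : ℕ} {e w : Fin m → M} {p : Fin m → Prop}
    {δ : ℝ} (hδ : 0 ≤ δ) (hfix : ∀ i, p i → w i = e i)
    (hmoved : ∀ i j, ¬ p j → |dist (w i) (w j) - dist (e i) (e j)| ≤ δ) (i j : Fin m) :
    |dist (w i) (w j) - dist (e i) (e j)| ≤ δ := by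
  by_cases hj : p j
  · by_cases hi : p i
    · simp [hfix i hi, hfix j hj, hδ]
    · rw [dist_comm (w i), dist_comm (e i)]
      exact hmoved j i hi
  · exact hmoved i j hj

namespace IsAddAILocalRetract

theorem isAILocalRetract {S : Set M} (hS : IsAddAILocalRetract S) : IsAILocalRetract S := by
  classical
  intro E ε hε
  obtain ⟨μ, hμ, hμE⟩ := E.exists_pos_forall_le_dist
  let e : E ≃ Fin E.card := E.equivFin
  obtain ⟨w, hwS, hwfix, hw⟩ := hS E.card (fun i => e.symm i) (ε * μ) (by positivity)
  let r : M → M := fun x => if hx : x ∈ E then w (e ⟨x, hx⟩) else x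
  have hr : ∀ x (hx : x ∈ E), r x = w (e ⟨x, hx⟩) := fun x hx => dif_pos hx
  refine ⟨r, fun x hx => hr x hx ▸ hwS _, fun x hx hxS => ?_, fun x hx y hy => ?_⟩
  · rw [hr x hx, hwfix _ (by simpa using hxS)]
    simp
  · have key : |dist (r x) (r y) - dist x y| ≤ ε * dist x y := by
      rcases eq_or_ne x y with rfl | hxy
      · simp
      · have hxy' := hw (e ⟨x, hx⟩) (e ⟨y, hy⟩)
        simp only [Equiv.symm_apply_apply] at hxy'
        rw [hr x hx, hr y hy]
        exact hxy'.trans (by gcongr; exact hμE x hx y hy hxy)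
    constructor <;> linarith [abs_le.1 key]

theorem closure {D : Set M} (hD : IsAddAILocalRetract D) :
    IsAddAILocalRetract (_root_.closure D) := by
  classical
  intro m e δ hδ
  have happrox : ∀ i, ∃ d, (e i ∈ _root_.closure D → d ∈ D ∧ dist (e i) d < δ / 3) ∧
      (e i ∉ _root_.closure D → d = e i) := by
    intro i
    by_cases hi : e i ∈ _root_.closure D
    · obtain ⟨d, hd, hdist⟩ := Metric.mem_closure_iff.1 hi (δ / 3) (by positivity)
      exact ⟨d, fun _ => ⟨hd, hdist⟩, fun h => (h hi).elim⟩
    · exact ⟨e i, fun h => (hi h).elim, fun _ => rfl⟩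
  choose d hd_near hd_eq using happrox
  obtain ⟨w, hwD, hwfix, hw⟩ := hD m d (δ / 3) (by positivity)
  refine ⟨fun i => if e i ∈ _root_.closure D then e i else w i, fun i => ?_, fun i hi => if_pos hi,
    abs_dist_sub_dist_le_of_fixed hδ.le (fun i hi => if_pos hi) fun i j hj => ?_⟩
  · dsimp only
    split_ifs with hi
    exacts [hi, subset_closure (hwD i)]
  · have hwj := hw i j
    rw [hd_eq j hj] at hwj
    simp only [if_neg hj]
    split_ifs with hi
    · obtain ⟨hdi, hdist⟩ := hd_near i hi
      rw [hwfix i hdi] at hwj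
      have h₁ := abs_dist_sub_le (e i) (d i) (w j)
      have h₂ := abs_dist_sub_le (d i) (e i) (e j)
      rw [dist_comm (d i) (e i)] at h₂
      rw [abs_le] at hwj h₁ h₂ ⊢
      constructor <;> linarith [hwj.1, hwj.2, h₁.1, h₁.2, h₂.1, h₂.2]
    · rw [hd_eq i hi] at hwj
      linarith

end IsAddAILocalRetract

def RealizesPattern {m : ℕ} (ds ws : Fin m → M) (Q P : Fin m → Fin m → ℚ) (δ : ℝ) : Prop :=
  ∀ i j, |dist (ds i) (ws j) - Q i j| ≤ δ ∧ |dist (ws i) (ws j) - P i j| ≤ δ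

theorem RealizesPattern.abs_dist_sub_dist_le {m : ℕ} {ds ws ys : Fin m → M}
    {Q P : Fin m → Fin m → ℚ} {δ : ℝ} (hw : RealizesPattern ds ws Q P δ)
    (hy : RealizesPattern ds ys Q P δ) (i j : Fin m) :
    |dist (ds i) (ws j) - dist (ds i) (ys j)| ≤ 2 * δ ∧
      |dist (ws i) (ws j) - dist (ys i) (ys j)| ≤ 2 * δ := by
  obtain ⟨hw₁, hw₂⟩ := hw i j
  obtain ⟨hy₁, hy₂⟩ := hy i j
  simp only [abs_le] at *
  constructor <;> constructor <;> linarith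

open Classical in
noncomputable def realizePattern {m : ℕ} (ds : Fin m → M) (Q P : Fin m → Fin m → ℚ) (δ : ℚ) :
    Fin m → M :=
  if h : ∃ ws, RealizesPattern ds ws Q P δ then h.choose else ds

theorem realizePattern_spec {m : ℕ} {ds : Fin m → M} {Q P : Fin m → Fin m → ℚ} {δ : ℚ}
    (h : ∃ ws, RealizesPattern ds ws Q P δ) :
    RealizesPattern ds (realizePattern ds Q P δ) Q P δ := by
  rw [realizePattern, dif_pos h]
  exact h.choose_spec

/-- An `m`-ary function symbol is a pattern `(Q, P, δ)` together with an index `j`; it is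
interpreted as the `j`-th point of a chosen realization of the pattern over the arguments. -/
def patternLanguage : FirstOrder.Language.{0, 0} where
  Functions m := (Fin m → Fin m → ℚ) × (Fin m → Fin m → ℚ) × ℚ × Fin m
  Relations _ := Empty

noncomputable instance : patternLanguage.Structure M where
  funMap f ds := realizePattern ds f.1 f.2.1 f.2.2.1 f.2.2.2
  RelMap r := Empty.elim r

theorem isAddAILocalRetract_substructure (D : patternLanguage.Substructure M)
    (hD : (D : Set M).Nonempty) : IsAddAILocalRetract (D : Set M) := by
  classical
  intro m e δ hδ
  obtain ⟨a, ha⟩ := hD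
  obtain ⟨τ, hτ, hτδ⟩ := exists_pos_rat_lt (half_pos hδ)
  have hτ' : (0 : ℝ) < τ := by exact_mod_cast hτ
  -- the operations may only be applied to points of `D`
  let ds : Fin m → M := fun i => if e i ∈ D then e i else a
  have hdsD : ∀ i, ds i ∈ D := fun i => by
    by_cases hi : e i ∈ D
    · simpa only [ds, if_pos hi] using hi
    · simp only [ds, if_neg hi]
      exact ha
  choose Q hQ using fun i j => exists_rat_near (dist (ds i) (e j)) hτ'
  choose P hP using fun i j => exists_rat_near (dist (e i) (e j)) hτ'
  have he : RealizesPattern ds e Q P τ := fun i j => ⟨(hQ i j).le, (hP i j).le⟩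
  let ws := realizePattern ds Q P τ
  have hws := realizePattern_spec ⟨e, he⟩
  have hwsD : ∀ j, ws j ∈ D := fun j => D.fun_mem (Q, P, τ, j) ds hdsD
  refine ⟨fun i => if e i ∈ D then e i else ws i, fun i => ?_, fun i hi => if_pos hi,
    abs_dist_sub_dist_le_of_fixed hδ.le (fun i hi => if_pos hi) fun i j hj => ?_⟩
  · dsimp only
    split_ifs with hi
    exacts [hi, hwsD i]
  · obtain ⟨h₁, h₂⟩ := hws.abs_dist_sub_dist_le he i j
    simp only [if_neg hj]
    split_ifs with hi
    · simp only [ds, if_pos hi] at h₁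
      linarith
    · linarith

theorem card_closure_patternLanguage_le {A : Set M} (hA : A.Infinite) :
    #(Substructure.closure patternLanguage A) ≤ #A := by
  have hA' : ℵ₀ ≤ #A := Cardinal.infinite_iff.1 hA.to_subtype
  have hfun : #(Σ m, patternLanguage.Functions m) ≤ ℵ₀ :=
    Cardinal.mk_le_aleph0 (α := Σ m, (Fin m → Fin m → ℚ) × (Fin m → Fin m → ℚ) × ℚ × Fin m)
  have h := Substructure.lift_card_closure_le (L := patternLanguage) (s := A)
  rw [lift_uzero, lift_uzero] at h
  exact h.trans (max_le hA' (add_le_of_le hA' le_rfl ((lift_le_aleph0.2 hfun).trans hA')))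

end

theorem stmt18_general {M : Type*} [MetricSpace M] (N : Set M) (A : Set M)
    (hAinf : A.Infinite) (hAdense : N ⊆ closure A) :
    ∃ S : Set M, N ⊆ S ∧ IsAILocalRetract S ∧
      ∃ B : Set M, B ⊆ S ∧ S ⊆ closure B ∧ Cardinal.mk B ≤ Cardinal.mk A := by
  set D := Substructure.closure patternLanguage A
  have hAD : A ⊆ D := Substructure.subset_closure
  have hD : IsAddAILocalRetract (D : Set M) :=
    isAddAILocalRetract_substructure D (hAinf.nonempty.mono hAD)
  exact ⟨closure D, hAdense.trans (closure_mono hAD), hD.closure.isAILocalRetract,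
    D, subset_closure, subset_rfl, card_closure_patternLanguage_le hAinf⟩

theorem stmt18 {M : Type*} [MetricSpace M] (N : Set M) (A : Set M)
    (hAN : A ⊆ N) (hAinf : A.Infinite) (hAdense : N ⊆ closure A) :
    ∃ S : Set M, N ⊆ S ∧ IsAILocalRetract S ∧
      ∃ B : Set M, B ⊆ S ∧ S ⊆ closure B ∧ Cardinal.mk B ≤ Cardinal.mk A :=
  stmt18_general N A hAinf hAdense
end

section
/- Let M be a complete metric space which has the approximate midpoint property, and let N be a separable subset of M. Then there exists a closed separable subset S of M with N ⊆ S such that S has the approximate midpoint property, i.e. for all x, y ∈ S and every ε > 0 there exists z ∈ S with d(x,z) ≤ d(x,y)/2 + ε and d(y,z) ≤ d(x,y)/2 + ε. -/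
theorem stmt19 {M : Type*} [MetricSpace M] [CompleteSpace M]
    (hmid : ∀ x y : M, ∀ ε : ℝ, 0 < ε →
      ∃ z : M, dist x z ≤ dist x y / 2 + ε ∧ dist y z ≤ dist x y / 2 + ε)
    (N : Set M) (hN : TopologicalSpace.IsSeparable N) :
    ∃ S : Set M, IsClosed S ∧ TopologicalSpace.IsSeparable S ∧ N ⊆ S ∧
      ∀ x ∈ S, ∀ y ∈ S, ∀ ε : ℝ, 0 < ε →
        ∃ z ∈ S, dist x z ≤ dist x y / 2 + ε ∧ dist y z ≤ dist x y / 2 + ε := by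
  choose f hf1 hf2 using fun (x y : M) (n : ℕ) =>
    hmid x y (1 / ((n : ℝ) + 1)) (by positivity)
  obtain ⟨c, hc, hNc⟩ := hN
  let D : ℕ → Set M := fun k => Nat.rec c
    (fun _ Dk => Dk ∪ ⋃ n, Set.image2 (fun x y => f x y n) Dk Dk) k
  have hDmono : ∀ k, D k ⊆ D (k + 1) := fun k => Set.subset_union_left
  have hDcount : ∀ k, (D k).Countable := by
    intro k; induction k with
    | zero => exact hc
    | succ k ih => exact ih.union (Set.countable_iUnion fun n => ih.image2 ih _)
  set E := ⋃ k, D k with hE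
  have hEcount : E.Countable := Set.countable_iUnion hDcount
  have hmem : ∀ x ∈ E, ∀ y ∈ E, ∀ n : ℕ, f x y n ∈ E := by
    intro x hx y hy n
    obtain ⟨i, hi⟩ := Set.mem_iUnion.1 hx
    obtain ⟨j, hj⟩ := Set.mem_iUnion.1 hy
    have hmono : Monotone D := monotone_nat_of_le_succ hDmono
    have hi' : x ∈ D (max i j) := hmono (le_max_left i j) hi
    have hj' : y ∈ D (max i j) := hmono (le_max_right i j) hj
    refine Set.mem_iUnion.2 ⟨max i j + 1, Or.inr ?_⟩
    exact Set.mem_iUnion.2 ⟨n, Set.mem_image2_of_mem hi' hj'⟩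
  refine ⟨closure E, isClosed_closure, hEcount.isSeparable.closure,
    hNc.trans (closure_mono (Set.subset_iUnion D 0)), ?_⟩
  intro x hx y hy ε hε
  have hε3 : 0 < ε / 3 := by linarith
  obtain ⟨x', hx'E, hx'⟩ := Metric.mem_closure_iff.1 hx (ε / 3) hε3
  obtain ⟨y', hy'E, hy'⟩ := Metric.mem_closure_iff.1 hy (ε / 3) hε3
  obtain ⟨n, hn⟩ := exists_nat_one_div_lt hε3
  refine ⟨f x' y' n, subset_closure (hmem x' hx'E y' hy'E n), ?_, ?_⟩
  · have h1 := hf1 x' y' n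
    have hd : dist x' y' ≤ dist x y + 2 * (ε / 3) := by
      have := dist_triangle4 x' x y y'
      have h2 : dist x' x = dist x x' := dist_comm _ _
      have h3 : dist y y' < ε / 3 := hy'
      linarith
    have h4 := dist_triangle x x' (f x' y' n)
    linarith
  · have h1 := hf2 x' y' n
    have hd : dist x' y' ≤ dist x y + 2 * (ε / 3) := by
      have := dist_triangle4 x' x y y'
      have h2 : dist x' x = dist x x' := dist_comm _ _
      linarith
    have h4 := dist_triangle y y' (f x' y' n)
    linarith
end
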